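/- arXiv:2511.20593 — 8 statements merged into one kernel-verified Lean document; each statement's English description precedes it below -/
import Mathlib

section
/- Let X ⊆ ℝⁿ be an open set, x* ∈ X, and f : ℝⁿ → ℝⁿ a continuous map with f(x*) = 0. Suppose V : ℝⁿ → ℝ is continuously differentiable with V(x*) = 0, V(x) > 0 for all x ∈ X \ {x*}, and ⟨∇V(x), f(x)⟩ < 0 for all x ∈ X \ {x*}. Then x* is Lyapunov stable: for every ε > 0 such that the closed ball of radius ε around x* is contained in X, there exists δ > 0 such that every trajectory x(·) of ẋ = f(x) with ‖x(0) − x*‖ < δ satisfies ‖x(t) − x*‖ < ε for all t ≥ 0. -/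
open RealInnerProductSpace

/-- **Lyapunov stability.** If `V` is a continuously differentiable function that is
positive on `X \ {x*}`, vanishes at `x*`, and whose derivative along the vector field `f`
is negative on `X \ {x*}`, then the equilibrium `x*` of `ẋ = f(x)` is Lyapunov stable. -/
theorem lyapunov_stability {n : ℕ} (X : Set (EuclideanSpace ℝ (Fin n))) (hX : IsOpen X)
    (xstar : EuclideanSpace ℝ (Fin n)) (hxstar : xstar ∈ X)
    (f : EuclideanSpace ℝ (Fin n) → EuclideanSpace ℝ (Fin n)) (hf : Continuous f)
    (hfeq : f xstar = 0)
    (V : EuclideanSpace ℝ (Fin n) → ℝ) (hV : ContDiff ℝ 1 V)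
    (hV0 : V xstar = 0)
    (hVpos : ∀ x ∈ X \ {xstar}, 0 < V x)
    (hVdot : ∀ x ∈ X \ {xstar}, ⟪gradient V x, f x⟫ < 0) :
    ∀ ε > 0, Metric.closedBall xstar ε ⊆ X →
      ∃ δ > 0, ∀ x : ℝ → EuclideanSpace ℝ (Fin n),
        (∀ t : ℝ, 0 ≤ t → HasDerivAt x (f (x t)) t) →
        ‖x 0 - xstar‖ < δ →
        ∀ t : ℝ, 0 ≤ t → ‖x t - xstar‖ < ε := by
  intro ε hε hball
  have hVc : Continuous V := hV.continuous
  by_cases hS : (Metric.sphere xstar ε).Nonempty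
  · -- main case: sphere nonempty
    obtain ⟨z, hz, hzmin'⟩ := (isCompact_sphere xstar ε).exists_isMinOn hS hVc.continuousOn
    have hzmin : ∀ y ∈ Metric.sphere xstar ε, V z ≤ V y := fun y hy => hzmin' hy
    set m : ℝ := V z with hm
    have hzX : z ∈ X \ {xstar} := by
      constructor
      · exact hball (Metric.sphere_subset_closedBall hz)
      · simp only [Set.mem_singleton_iff]
        intro h
        rw [mem_sphere_iff_norm, h, sub_self, norm_zero] at hz
        linarith
    have hmpos : 0 < m := hVpos z hzX
    -- choose δ
    have hopen : IsOpen (V ⁻¹' Set.Iio m) := isOpen_Iio.preimage hVc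
    have hxmem : xstar ∈ V ⁻¹' Set.Iio m := by simp [hV0, hmpos]
    obtain ⟨δ₁, hδ₁pos, hδ₁⟩ := Metric.isOpen_iff.1 hopen xstar hxmem
    refine ⟨min δ₁ ε, lt_min hδ₁pos hε, ?_⟩
    intro x hx hx0 t ht
    by_contra hcon
    push_neg at hcon
    -- first exit time
    set E : Set ℝ := {s | 0 ≤ s ∧ ε ≤ ‖x s - xstar‖} with hE
    have hEne : E.Nonempty := ⟨t, ht, hcon⟩
    have hEbdd : BddBelow E := ⟨0, fun s hs => hs.1⟩
    set T : ℝ := sInf E with hT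
    have hTlb : ∀ s ∈ E, T ≤ s := fun s hs => csInf_le hEbdd hs
    have hT0 : 0 ≤ T := le_csInf hEne fun s hs => hs.1
    have hcx : ∀ s : ℝ, 0 ≤ s → ContinuousAt x s := fun s hs => (hx s hs).continuousAt
    have hlt : ∀ s : ℝ, 0 ≤ s → s < T → ‖x s - xstar‖ < ε := by
      intro s hs hsT
      by_contra h
      push_neg at h
      exact absurd (hTlb s ⟨hs, h⟩) (not_le.2 hsT)
    have hx0ε : ‖x 0 - xstar‖ < ε := lt_of_lt_of_le hx0 (min_le_right _ _)
    -- T ∈ E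
    have hTE : ε ≤ ‖x T - xstar‖ := by
      by_contra h
      push_neg at h
      have hc : ContinuousAt (fun s => ‖x s - xstar‖) T :=
        ((hcx T hT0).sub continuousAt_const).norm
      obtain ⟨η, hηpos, hη⟩ := Metric.continuousAt_iff.1 hc (ε - ‖x T - xstar‖) (by linarith)
      have : T + η ≤ T := by
        apply le_csInf hEne
        intro s hs
        by_contra hc2
        push_neg at hc2
        have hdist : dist s T < η := by
          rw [Real.dist_eq, abs_lt]
          constructor <;> [linarith [hTlb s hs]; linarith]
        have h5 := hη hdist
        rw [Real.dist_eq] at h5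
        have h6 := abs_lt.1 h5
        have h7 := hs.2
        linarith [h6.1, h6.2]
      linarith
    have hTpos : 0 < T := by
      rcases lt_or_eq_of_le hT0 with h | h
      · exact h
      · exfalso; rw [← h] at hTE; linarith
    -- ‖x T - xstar‖ ≤ ε
    have hTle : ‖x T - xstar‖ ≤ ε := by
      have hc : Filter.Tendsto (fun s => ‖x s - xstar‖) (nhdsWithin T (Set.Iio T))
          (nhds ‖x T - xstar‖) :=
        (((hcx T hT0).sub continuousAt_const).norm).continuousWithinAt
      refine le_of_tendsto hc ?_
      filter_upwards [Ioo_mem_nhdsLT hTpos] with s hs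
      exact le_of_lt (hlt s hs.1.le hs.2)
    have hTsph : x T ∈ Metric.sphere xstar ε := by
      rw [mem_sphere_iff_norm]
      linarith
    -- the Lyapunov function decreases along the trajectory on [0, T]
    have hinball : ∀ s : ℝ, 0 ≤ s → s ≤ T → x s ∈ Metric.closedBall xstar ε := by
      intro s hs hsT
      rw [Metric.mem_closedBall, dist_eq_norm]
      rcases lt_or_eq_of_le hsT with h | h
      · exact (hlt s hs h).le
      · rw [h]; exact hTle
    have hderiv : ∀ s : ℝ, 0 ≤ s →
        HasDerivAt (fun u => V (x u)) ⟪gradient V (x s), f (x s)⟫ s := by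
      intro s hs
      have hdV : HasGradientAt V (gradient V (x s)) (x s) :=
        (hV.differentiable one_ne_zero (x s)).hasGradientAt
      have := hdV.hasFDerivAt.comp_hasDerivAt s (hx s hs)
      have h' : HasDerivAt (fun u => V (x u)) _ s := this
      simpa using h'
    have hanti : AntitoneOn (fun u => V (x u)) (Set.Icc 0 T) := by
      apply antitoneOn_of_deriv_nonpos (convex_Icc 0 T)
      · intro s hs
        exact (hVc.continuousAt.comp (hcx s hs.1)).continuousWithinAt
      · intro s hs
        rw [interior_Icc] at hs
        exact (hderiv s hs.1.le).differentiableAt.differentiableWithinAt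
      · intro s hs
        rw [interior_Icc] at hs
        rw [(hderiv s hs.1.le).deriv]
        rcases eq_or_ne (x s) xstar with h | h
        · rw [h, hfeq, inner_zero_right]
        · have hmem : x s ∈ X \ {xstar} :=
            ⟨hball (hinball s hs.1.le hs.2.le), h⟩
          exact (hVdot _ hmem).le
    have h1 : V (x T) ≤ V (x 0) :=
      hanti ⟨le_refl 0, hT0⟩ ⟨hT0, le_refl T⟩ hT0
    have h2 : V (x 0) < m := by
      have : x 0 ∈ Metric.ball xstar δ₁ := by
        rw [Metric.mem_ball, dist_eq_norm]
        exact lt_of_lt_of_le hx0 (min_le_left _ _)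
      exact hδ₁ this
    have h3 : m ≤ V (x T) := hzmin _ hTsph
    linarith
  · -- sphere empty: trajectories can never reach distance ε
    refine ⟨ε, hε, ?_⟩
    intro x hx hx0 t ht
    by_contra hcon
    push_neg at hcon
    have hcont : ContinuousOn (fun s => ‖x s - xstar‖) (Set.Icc 0 t) := by
      intro s hs
      exact (((hx s hs.1).continuousAt.sub continuousAt_const).norm).continuousWithinAt
    have := intermediate_value_Icc ht hcont
    have hεmem : ε ∈ Set.Icc ‖x 0 - xstar‖ ‖x t - xstar‖ := ⟨hx0.le, hcon⟩
    obtain ⟨s, _, hsval⟩ := this hεmem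
    exact hS ⟨x s, by rw [mem_sphere_iff_norm]; exact hsval⟩
end

section
/- Let X ⊆ ℝⁿ be an open set, x* ∈ X, and f : ℝⁿ → ℝⁿ a continuous map with f(x*) = 0. Suppose V : ℝⁿ → ℝ is continuously differentiable with V(x*) = 0, V(x) > 0 for all x ∈ X \ {x*}, and ⟨∇V(x), f(x)⟩ < 0 for all x ∈ X \ {x*}. Then x* is locally asymptotically stable: there exists δ > 0 such that every trajectory x(·) of ẋ = f(x) with ‖x(0) − x*‖ < δ satisfies x(t) ∈ X for all t ≥ 0 and x(t) → x* as t → ∞. -/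
open RealInnerProductSpace Filter

variable {n : ℕ}

variable {n : ℕ}

lemma lyap_chain {V : EuclideanSpace ℝ (Fin n) → ℝ} (hV : ContDiff ℝ 1 V)
    {x : ℝ → EuclideanSpace ℝ (Fin n)} {v : EuclideanSpace ℝ (Fin n)} {t : ℝ}
    (hx : HasDerivAt x v t) :
    HasDerivAt (fun s => V (x s)) ⟪gradient V (x t), v⟫ t := by
  have h1 := (hV.differentiable one_ne_zero (x t)).hasGradientAt
  have h2 := h1.hasFDerivAt.comp_hasDerivAt t hx
  simpa [InnerProductSpace.toDual_apply_apply, Function.comp_def] using h2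

lemma lyap_anti {D : Set ℝ} (hD : Convex ℝ D) {g g' : ℝ → ℝ}
    (hc : ContinuousOn g D) (hd : ∀ s ∈ interior D, HasDerivAt g (g' s) s)
    (h0 : ∀ s ∈ interior D, g' s ≤ 0) : AntitoneOn g D :=
  antitoneOn_of_deriv_nonpos hD hc
    (fun s hs => (hd s hs).differentiableAt.differentiableWithinAt)
    (fun s hs => by rw [(hd s hs).deriv]; exact h0 s hs)

lemma lyap_grad_cont {V : EuclideanSpace ℝ (Fin n) → ℝ} (hV : ContDiff ℝ 1 V) :
    Continuous (gradient V) := by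
  have : gradient V = fun x => (InnerProductSpace.toDual ℝ _).symm (fderiv ℝ V x) := rfl
  rw [this]
  exact (InnerProductSpace.toDual ℝ _).symm.continuous.comp (hV.continuous_fderiv one_ne_zero)

lemma lyap_invariant
    (X : Set (EuclideanSpace ℝ (Fin n))) (hX : IsOpen X)
    (xstar : EuclideanSpace ℝ (Fin n)) (hxstar : xstar ∈ X)
    (f : EuclideanSpace ℝ (Fin n) → EuclideanSpace ℝ (Fin n)) (hf : Continuous f)
    (hfeq : f xstar = 0)
    (V : EuclideanSpace ℝ (Fin n) → ℝ) (hV : ContDiff ℝ 1 V)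
    (hV0 : V xstar = 0)
    (hVpos : ∀ x ∈ X \ {xstar}, 0 < V x)
    (hVdot : ∀ x ∈ X \ {xstar}, ⟪gradient V x, f x⟫ < 0)
    (r : ℝ) (hr : 0 < r) (hrX : Metric.closedBall xstar r ⊆ X)
    (m : ℝ) (hmpos : 0 < m)
    (hmS : ∀ y ∈ Metric.sphere xstar r, m ≤ V y)
    (U : Set (EuclideanSpace ℝ (Fin n)))
    (hU : U = Metric.ball xstar r ∩ V ⁻¹' (Set.Iio m))
    (hUopen : IsOpen U)
    (x : ℝ → EuclideanSpace ℝ (Fin n))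
    (hx : ∀ t : ℝ, 0 ≤ t → HasDerivAt x (f (x t)) t)
    (hx0 : x 0 ∈ U) :
    ∀ t : ℝ, 0 ≤ t → x t ∈ U := by
  have hxc : ∀ t : ℝ, 0 ≤ t → ContinuousAt x t := fun t ht => (hx t ht).continuousAt
  -- derivative of V ∘ x is nonpositive wherever x s ∈ X
  have hderiv : ∀ s : ℝ, 0 ≤ s → HasDerivAt (fun u => V (x u)) ⟪gradient V (x s), f (x s)⟫ s :=
    fun s hs => lyap_chain hV (hx s hs)
  have hdnonpos : ∀ y : EuclideanSpace ℝ (Fin n), y ∈ X → ⟪gradient V y, f y⟫ ≤ 0 := by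
    intro y hy
    by_cases hyx : y = xstar
    · simp [hyx, hfeq]
    · exact (hVdot y ⟨hy, hyx⟩).le
  by_contra hcon
  push_neg at hcon
  obtain ⟨t₀, ht₀, hbad⟩ := hcon
  set B := {t : ℝ | 0 ≤ t ∧ x t ∉ U} with hB
  have hBne : B.Nonempty := ⟨t₀, ht₀, hbad⟩
  have hBbd : BddBelow B := ⟨0, fun b hb => hb.1⟩
  set τ := sInf B with hτ
  have hτ0 : 0 ≤ τ := le_csInf hBne fun b hb => hb.1
  have hbefore : ∀ s : ℝ, 0 ≤ s → s < τ → x s ∈ U := by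
    intro s hs hsτ
    by_contra h
    exact absurd (csInf_le hBbd ⟨hs, h⟩) (not_le.2 hsτ)
  -- continuity neighborhoods: whenever x t ∈ U, there is ε > 0 with x s ∈ U for |s - t| < ε
  have hnbhd : ∀ t : ℝ, 0 ≤ t → x t ∈ U → ∃ ε > 0, ∀ s : ℝ, |s - t| < ε → x s ∈ U := by
    intro t ht htU
    have := (hxc t ht).preimage_mem_nhds (hUopen.mem_nhds htU)
    rcases Metric.mem_nhds_iff.1 this with ⟨ε, hε, hball⟩
    exact ⟨ε, hε, fun s hs => hball (by simpa [Real.dist_eq] using hs)⟩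
  have hτpos : 0 < τ := by
    obtain ⟨ε, hε, hball⟩ := hnbhd 0 le_rfl hx0
    have : ∀ b ∈ B, ε ≤ b := by
      intro b hb
      by_contra h
      push_neg at h
      exact hb.2 (hball b (by rw [sub_zero, abs_of_nonneg hb.1]; exact h))
    linarith [le_csInf hBne this]
  -- x τ ∈ closedBall via limits from the left
  have hxcont : ContinuousOn x (Set.Icc 0 τ) :=
    fun s hs => (hxc s hs.1).continuousWithinAt
  have hIcoU : ∀ s ∈ Set.Ico 0 τ, x s ∈ U := fun s hs => hbefore s hs.1 hs.2
  have hne : (nhdsWithin τ (Set.Ico 0 τ)).NeBot := by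
    apply mem_closure_iff_nhdsWithin_neBot.1
    rw [closure_Ico hτpos.ne]
    exact ⟨hτpos.le, le_rfl⟩
  have htendsto : Tendsto x (nhdsWithin τ (Set.Ico 0 τ)) (nhds (x τ)) :=
    ((hxc τ hτ0).continuousWithinAt)
  have hxτball : x τ ∈ Metric.closedBall xstar r := by
    refine Metric.isClosed_closedBall.mem_of_tendsto htendsto ?_
    filter_upwards [eventually_mem_nhdsWithin] with s hs
    exact Metric.ball_subset_closedBall ((hU ▸ hIcoU s hs).1)
  -- V (x τ) ≤ V (x 0) < m by antitonicity on [0, τ]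
  have hanti : AntitoneOn (fun u => V (x u)) (Set.Icc 0 τ) := by
    refine lyap_anti (g' := fun s => ⟪gradient V (x s), f (x s)⟫) (convex_Icc 0 τ) (hV.continuous.comp_continuousOn hxcont) ?_ ?_
    · intro s hs
      rw [interior_Icc] at hs
      exact hderiv s hs.1.le
    · intro s hs
      rw [interior_Icc] at hs
      have hsU := hbefore s hs.1.le hs.2
      exact hdnonpos _ (hrX (Metric.ball_subset_closedBall (hU ▸ hsU).1))
  have hVτ : V (x τ) ≤ V (x 0) :=
    hanti (Set.mem_Icc.2 ⟨le_rfl, hτ0⟩) (Set.mem_Icc.2 ⟨hτ0, le_rfl⟩) hτ0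
  have hV0m : V (x 0) < m := (hU ▸ hx0).2
  have hxτU : x τ ∈ U := by
    rw [hU]
    refine ⟨?_, lt_of_le_of_lt hVτ hV0m⟩
    rcases lt_or_eq_of_le (Metric.mem_closedBall.1 hxτball) with h | h
    · exact Metric.mem_ball.2 h
    · exact absurd (hmS _ (Metric.mem_sphere.2 h)) (not_le.2 (lt_of_le_of_lt hVτ hV0m))
  -- contradiction: points of B arbitrarily close to τ from the right
  obtain ⟨ε, hε, hball⟩ := hnbhd τ hτ0 hxτU
  obtain ⟨b, hbB, hbε⟩ := exists_lt_of_csInf_lt hBne (show sInf B < τ + ε by linarith)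
  have hbτ : τ ≤ b := csInf_le hBbd hbB
  exact hbB.2 (hball b (by rw [abs_of_nonneg (by linarith)]; linarith))

lemma lyap_tendsto
    (X : Set (EuclideanSpace ℝ (Fin n))) (hX : IsOpen X)
    (xstar : EuclideanSpace ℝ (Fin n)) (hxstar : xstar ∈ X)
    (f : EuclideanSpace ℝ (Fin n) → EuclideanSpace ℝ (Fin n)) (hf : Continuous f)
    (hfeq : f xstar = 0)
    (V : EuclideanSpace ℝ (Fin n) → ℝ) (hV : ContDiff ℝ 1 V)
    (hV0 : V xstar = 0)
    (hVpos : ∀ x ∈ X \ {xstar}, 0 < V x)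
    (hVdot : ∀ x ∈ X \ {xstar}, ⟪gradient V x, f x⟫ < 0)
    (r : ℝ) (hr : 0 < r) (hrX : Metric.closedBall xstar r ⊆ X)
    (m : ℝ) (hmpos : 0 < m)
    (hmS : ∀ y ∈ Metric.sphere xstar r, m ≤ V y)
    (U : Set (EuclideanSpace ℝ (Fin n)))
    (hU : U = Metric.ball xstar r ∩ V ⁻¹' (Set.Iio m))
    (x : ℝ → EuclideanSpace ℝ (Fin n))
    (hx : ∀ t : ℝ, 0 ≤ t → HasDerivAt x (f (x t)) t)
    (hnt : Nontrivial (EuclideanSpace ℝ (Fin n)))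
    (hinv : ∀ t : ℝ, 0 ≤ t → x t ∈ U) :
    Tendsto x atTop (nhds xstar) := by
  have hxc : ∀ t : ℝ, 0 ≤ t → ContinuousAt x t := fun t ht => (hx t ht).continuousAt
  have hderiv : ∀ s : ℝ, 0 ≤ s → HasDerivAt (fun u => V (x u)) ⟪gradient V (x s), f (x s)⟫ s :=
    fun s hs => lyap_chain hV (hx s hs)
  have hXall : ∀ t : ℝ, 0 ≤ t → x t ∈ Metric.ball xstar r := fun t ht => (hU ▸ hinv t ht).1
  have hXmem : ∀ t : ℝ, 0 ≤ t → x t ∈ X :=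
    fun t ht => hrX (Metric.ball_subset_closedBall (hXall t ht))
  have hdnonpos : ∀ y : EuclideanSpace ℝ (Fin n), y ∈ X → ⟪gradient V y, f y⟫ ≤ 0 := by
    intro y hy
    by_cases hyx : y = xstar
    · simp [hyx, hfeq]
    · exact (hVdot y ⟨hy, hyx⟩).le
  have hantiIci : AntitoneOn (fun u => V (x u)) (Set.Ici 0) := by
    refine lyap_anti (g' := fun s => ⟪gradient V (x s), f (x s)⟫) (convex_Ici 0)
      (fun s hs => hV.continuous.continuousAt.comp_continuousWithinAt
        (hxc s hs).continuousWithinAt) ?_ ?_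
    · intro s hs; rw [interior_Ici] at hs; exact hderiv s hs.le
    · intro s hs; rw [interior_Ici] at hs; exact hdnonpos _ (hXmem s hs.le)
  rw [Metric.tendsto_atTop]
  intro ε hε
  set ε' := min ε r with hε'def
  have hε' : 0 < ε' := lt_min hε hr
  have hε'r : ε' ≤ r := min_le_right _ _
  -- compact annulus and its minimum μ
  set D₁ := Metric.closedBall xstar r \ Metric.ball xstar ε' with hD₁
  have hD₁c : IsCompact D₁ :=
    (isCompact_closedBall xstar r).diff Metric.isOpen_ball
  have hD₁ne : D₁.Nonempty := by
    obtain ⟨z, hz⟩ : ∃ z, z ∈ Metric.sphere xstar r := NormedSpace.sphere_nonempty.2 hr.le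
    refine ⟨z, Metric.sphere_subset_closedBall hz, ?_⟩
    simp only [Metric.mem_ball, not_lt]
    rw [Metric.mem_sphere.1 hz]
    linarith
  obtain ⟨w, hwD, hwmin⟩ := hD₁c.exists_isMinOn hD₁ne hV.continuous.continuousOn
  have hwX : w ∈ X \ {xstar} := by
    refine ⟨hrX hwD.1, ?_⟩
    simp only [Set.mem_singleton_iff]
    intro h
    exact hwD.2 (h ▸ Metric.mem_ball_self hε')
  have hμpos : 0 < V w := hVpos w hwX
  set c := V w / 2 with hc
  have hcpos : 0 < c := by positivity
  -- there is T ≥ 0 with V (x T) ≤ c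
  have hT : ∃ T : ℝ, 0 ≤ T ∧ V (x T) ≤ c := by
    by_contra hcon
    push_neg at hcon
    set D₂ := Metric.closedBall xstar r ∩ V ⁻¹' (Set.Ici c) with hD₂
    have hD₂c : IsCompact D₂ :=
      (isCompact_closedBall xstar r).inter_right (isClosed_Ici.preimage hV.continuous)
    have hmemD₂ : ∀ t : ℝ, 0 ≤ t → x t ∈ D₂ := fun t ht =>
      ⟨Metric.ball_subset_closedBall (hXall t ht), (hcon t ht).le⟩
    have hD₂ne : D₂.Nonempty := ⟨x 0, hmemD₂ 0 le_rfl⟩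
    have hcont2 : ContinuousOn (fun y => ⟪gradient V y, f y⟫) D₂ :=
      ((lyap_grad_cont hV).inner hf).continuousOn
    obtain ⟨y₀, hy₀D, hy₀max⟩ := hD₂c.exists_isMaxOn hD₂ne hcont2
    set κ := -⟪gradient V y₀, f y₀⟫ with hκ
    have hy₀X : y₀ ∈ X \ {xstar} := by
      refine ⟨hrX hy₀D.1, ?_⟩
      simp only [Set.mem_singleton_iff]
      intro h
      have : c ≤ V xstar := h ▸ hy₀D.2
      rw [hV0] at this
      linarith
    have hκpos : 0 < κ := by
      have := hVdot y₀ hy₀X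
      simp only [hκ]; linarith
    -- g t := V (x t) + κ t is antitone on Ici 0
    have hg : AntitoneOn (fun u => V (x u) + κ * u) (Set.Ici 0) := by
      refine lyap_anti (g' := fun s => ⟪gradient V (x s), f (x s)⟫ + κ) (convex_Ici 0)
        (fun s hs => ((hV.continuous.continuousAt.comp_continuousWithinAt
          (hxc s hs).continuousWithinAt).add
          (continuousWithinAt_const.mul continuousWithinAt_id))) ?_ ?_
      · intro s hs; rw [interior_Ici] at hs
        have h1 := (hderiv s hs.le).add
          (((hasDerivAt_id s).const_mul κ))
        simp only [mul_one] at h1; exact h1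
      · intro s hs; rw [interior_Ici] at hs
        have hmax := hy₀max (hmemD₂ s hs.le)
        simp only [Set.mem_setOf_eq] at hmax
        simp only [hκ] at *
        linarith
    set T₀ := V (x 0) / κ + 1 with hT₀
    have hV00 : 0 < V (x 0) := lt_trans hcpos (hcon 0 le_rfl)
    have hT₀pos : 0 < T₀ := by positivity
    have := hg (Set.mem_Ici.2 le_rfl) (Set.mem_Ici.2 hT₀pos.le) hT₀pos.le
    simp only at this
    have hκT : κ * T₀ = V (x 0) + κ := by
      have hκ0 : κ ≠ 0 := ne_of_gt hκpos
      rw [hT₀, mul_add, mul_one, mul_div_assoc', mul_comm κ, mul_div_assoc, div_self hκ0, mul_one]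
    have hVT : V (x T₀) ≤ -κ := by linarith [this, hκT]
    linarith [hcon T₀ hT₀pos.le, hcpos, hκpos, hVT]
  obtain ⟨T, hT0, hTc⟩ := hT
  refine ⟨T, fun t ht => ?_⟩
  have ht0 : 0 ≤ t := le_trans hT0 ht
  have hVt : V (x t) ≤ c := le_trans (hantiIci (Set.mem_Ici.2 hT0) (Set.mem_Ici.2 ht0) ht) hTc
  have hxt : x t ∈ Metric.ball xstar ε' := by
    by_contra h
    have : x t ∈ D₁ := ⟨Metric.ball_subset_closedBall (hXall t ht0), h⟩
    have := hwmin this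
    simp only [Set.mem_setOf_eq] at this
    linarith
  calc dist (x t) xstar < ε' := Metric.mem_ball.1 hxt
    _ ≤ ε := min_le_left _ _

/-- **Local asymptotic stability via a strict Lyapunov function.** -/
theorem lyapunov_asymptotic_stability {n : ℕ}
    (X : Set (EuclideanSpace ℝ (Fin n))) (hX : IsOpen X)
    (xstar : EuclideanSpace ℝ (Fin n)) (hxstar : xstar ∈ X)
    (f : EuclideanSpace ℝ (Fin n) → EuclideanSpace ℝ (Fin n)) (hf : Continuous f)
    (hfeq : f xstar = 0)
    (V : EuclideanSpace ℝ (Fin n) → ℝ) (hV : ContDiff ℝ 1 V)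
    (hV0 : V xstar = 0)
    (hVpos : ∀ x ∈ X \ {xstar}, 0 < V x)
    (hVdot : ∀ x ∈ X \ {xstar}, ⟪gradient V x, f x⟫ < 0) :
    ∃ δ > 0, ∀ x : ℝ → EuclideanSpace ℝ (Fin n),
      (∀ t : ℝ, 0 ≤ t → HasDerivAt x (f (x t)) t) →
      ‖x 0 - xstar‖ < δ →
      (∀ t : ℝ, 0 ≤ t → x t ∈ X) ∧ Tendsto x atTop (nhds xstar) := by
  rcases subsingleton_or_nontrivial (EuclideanSpace ℝ (Fin n)) with hsub | hnt
  · refine ⟨1, one_pos, fun x hx hx0 => ⟨fun t ht => ?_, ?_⟩⟩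
    · rwa [Subsingleton.elim (x t) xstar]
    · have : x = fun _ => xstar := funext fun t => Subsingleton.elim _ _
      rw [this]; exact tendsto_const_nhds
  obtain ⟨r', hr', hr'X⟩ := Metric.isOpen_iff.1 hX xstar hxstar
  set r := r' / 2 with hrdef
  have hr : 0 < r := by positivity
  have hrX : Metric.closedBall xstar r ⊆ X := by
    refine subset_trans ?_ hr'X
    exact Metric.closedBall_subset_ball (by simp only [hrdef]; linarith)
  have hsne : (Metric.sphere xstar r).Nonempty :=
    NormedSpace.sphere_nonempty.2 hr.le
  obtain ⟨z, hz, hzmin⟩ := (isCompact_sphere xstar r).exists_isMinOn hsne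
    (hV.continuous.continuousOn)
  set m := V z with hm
  have hzX : z ∈ X \ {xstar} := by
    constructor
    · exact hrX (Metric.sphere_subset_closedBall hz)
    · simp only [Set.mem_singleton_iff]
      intro h; rw [h] at hz
      simp [Metric.mem_sphere, dist_self] at hz
      exact hr.ne' hz.symm
  have hmpos : 0 < m := hVpos z hzX
  have hmS : ∀ y ∈ Metric.sphere xstar r, m ≤ V y := fun y hy => hzmin hy
  set U := Metric.ball xstar r ∩ V ⁻¹' (Set.Iio m) with hU
  have hUopen : IsOpen U := Metric.isOpen_ball.inter (isOpen_Iio.preimage hV.continuous)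
  have hxU : xstar ∈ U := ⟨Metric.mem_ball_self hr, by simpa [hV0] using hmpos⟩
  obtain ⟨δ, hδ, hδU⟩ := Metric.isOpen_iff.1 hUopen xstar hxU
  refine ⟨δ, hδ, fun x hx hx0 => ?_⟩
  have hx0U : x 0 ∈ U := hδU (Metric.mem_ball.2 (by rwa [dist_eq_norm]))
  have hinv : ∀ t : ℝ, 0 ≤ t → x t ∈ U :=
    lyap_invariant X hX xstar hxstar f hf hfeq V hV hV0 hVpos hVdot r hr hrX m hmpos hmS
      U hU hUopen x hx hx0U
  refine ⟨fun t ht => hrX (Metric.ball_subset_closedBall (hU ▸ hinv t ht).1), ?_⟩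
  exact lyap_tendsto X hX xstar hxstar f hf hfeq V hV hV0 hVpos hVdot r hr hrX m hmpos hmS
    U hU x hx hnt hinv
end

section
/- Let X ⊆ ℝⁿ be an open set, f : ℝⁿ → ℝⁿ continuous, and V : ℝⁿ → ℝ continuously differentiable with ⟨∇V(x), f(x)⟩ ≤ 0 for all x ∈ X. Let c ∈ ℝ and suppose the sublevel set S = {x ∈ ℝⁿ | V(x) ≤ c} is compact and contained in X. Then S is forward invariant: every trajectory x(·) of ẋ = f(x) with x(0) ∈ S satisfies x(t) ∈ S for all t ≥ 0. -/
open RealInnerProductSpace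

/-- **Forward invariance of compact sublevel sets of a Lyapunov-like function.** -/
theorem sublevel_set_forward_invariant {n : ℕ}
    (X : Set (EuclideanSpace ℝ (Fin n))) (hX : IsOpen X)
    (f : EuclideanSpace ℝ (Fin n) → EuclideanSpace ℝ (Fin n)) (hf : Continuous f)
    (V : EuclideanSpace ℝ (Fin n) → ℝ) (hV : ContDiff ℝ 1 V)
    (hVdot : ∀ x ∈ X, ⟪gradient V x, f x⟫ ≤ 0)
    (c : ℝ)
    (hScompact : IsCompact {x : EuclideanSpace ℝ (Fin n) | V x ≤ c})
    (hSsub : {x : EuclideanSpace ℝ (Fin n) | V x ≤ c} ⊆ X) :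
    ∀ x : ℝ → EuclideanSpace ℝ (Fin n),
      (∀ t : ℝ, 0 ≤ t → HasDerivAt x (f (x t)) t) →
      x 0 ∈ {x : EuclideanSpace ℝ (Fin n) | V x ≤ c} →
      ∀ t : ℝ, 0 ≤ t → x t ∈ {x : EuclideanSpace ℝ (Fin n) | V x ≤ c} := by
  intro x hx hx0 t ht
  -- derivative of V ∘ x
  have hderiv : ∀ s : ℝ, 0 ≤ s →
      HasDerivAt (fun u => V (x u)) ⟪gradient V (x s), f (x s)⟫ s := by
    intro s hs
    have h1 : HasGradientAt V (gradient V (x s)) (x s) :=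
      ((hV.differentiable one_ne_zero) (x s)).hasGradientAt
    have h2 := h1.hasFDerivAt.comp_hasDerivAt s (hx s hs)
    exact h2
  set g : ℝ → ℝ := fun u => V (x u) with hg
  set A : Set ℝ := {s | s ∈ Set.Icc 0 t ∧ ∀ u ∈ Set.Icc (0:ℝ) s, g u ≤ c} with hA
  have h0A : (0:ℝ) ∈ A := by
    refine ⟨⟨le_refl 0, ht⟩, ?_⟩
    intro u hu
    have : u = 0 := le_antisymm hu.2 hu.1
    simpa [this] using hx0
  have hAbdd : BddAbove A := ⟨t, fun s hs => hs.1.2⟩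
  set τ := sSup A with hτ
  have hτ0 : 0 ≤ τ := le_csSup hAbdd h0A
  have hτt : τ ≤ t := csSup_le ⟨0, h0A⟩ fun s hs => hs.1.2
  -- g ≤ c on [0, τ]
  have hτc : ∀ u ∈ Set.Icc (0:ℝ) τ, g u ≤ c := by
    intro u hu
    rcases lt_or_eq_of_le hu.2 with hlt | heq
    · obtain ⟨a, haA, hua⟩ := exists_lt_of_lt_csSup ⟨0, h0A⟩ hlt
      exact haA.2 u ⟨hu.1, hua.le⟩
    · -- u = τ : use continuity from the left
      rw [heq]
      rcases eq_or_lt_of_le hτ0 with h0 | h0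
      · simpa [← h0] using hx0
      · have hcont : ContinuousAt g τ := (hderiv τ hτ0).continuousAt
        have htend : Filter.Tendsto g (nhdsWithin τ (Set.Iio τ)) (nhds (g τ)) :=
          hcont.continuousWithinAt.tendsto
        refine le_of_tendsto htend ?_
        filter_upwards [Ioo_mem_nhdsLT_of_mem ⟨h0, le_refl τ⟩] with v hv
        obtain ⟨a, haA, hva⟩ := exists_lt_of_lt_csSup ⟨0, h0A⟩ hv.2
        exact haA.2 v ⟨hv.1.le, hva.le⟩
  -- now show g t ≤ c by showing τ = t
  by_contra hcon
  have hτlt : τ < t := by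
    rcases lt_or_eq_of_le hτt with h | h
    · exact h
    · exact absurd (hτc t ⟨ht, h.ge⟩) hcon
  have hxτX : x τ ∈ X := hSsub (hτc τ ⟨hτ0, le_refl τ⟩)
  have hcx : ContinuousAt x τ := (hx τ hτ0).continuousAt
  obtain ⟨ε, hε, hball⟩ := Metric.mem_nhds_iff.1 (hcx.preimage_mem_nhds (hX.mem_nhds hxτX))
  set δ := min (ε / 2) (t - τ) with hδdef
  have hδ : 0 < δ := lt_min (half_pos hε) (sub_pos.2 hτlt)
  have hIccX : ∀ s ∈ Set.Icc τ (τ + δ), x s ∈ X := by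
    intro s hs
    apply hball
    have : |s - τ| < ε := by
      rw [abs_of_nonneg (sub_nonneg.2 hs.1)]
      calc s - τ ≤ δ := by linarith [hs.2]
        _ ≤ ε / 2 := min_le_left _ _
        _ < ε := by linarith
    simpa [Metric.mem_ball, Real.dist_eq] using this
  have hanti : AntitoneOn g (Set.Icc τ (τ + δ)) := by
    apply antitoneOn_of_deriv_nonpos (convex_Icc _ _)
    · intro s hs
      exact ((hderiv s (hτ0.trans hs.1)).continuousAt).continuousWithinAt
    · intro s hs
      rw [interior_Icc] at hs
      exact ((hderiv s (hτ0.trans hs.1.le)).differentiableAt).differentiableWithinAt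
    · intro s hs
      rw [interior_Icc] at hs
      have hds := hderiv s (hτ0.trans hs.1.le)
      rw [hds.deriv]
      exact hVdot _ (hIccX s ⟨hs.1.le, hs.2.le⟩)
  have hτδA : τ + δ ∈ A := by
    refine ⟨⟨by linarith, by have := min_le_right (ε/2) (t - τ); linarith⟩, ?_⟩
    intro u hu
    rcases le_or_gt u τ with h | h
    · exact hτc u ⟨hu.1, h⟩
    · have := hanti ⟨le_refl τ, by linarith⟩ ⟨h.le, hu.2⟩ h.le
      exact this.trans (hτc τ ⟨hτ0, le_refl τ⟩)
  have := le_csSup hAbdd hτδA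
  linarith
end

section
/- Let X ⊆ ℝⁿ, let f : ℝⁿ → ℝⁿ be continuous, let B : ℝⁿ → ℝ be continuously differentiable, and let ε > 0 be such that ⟨∇B(x), f(x)⟩ ≤ 0 for every x ∈ X with |B(x)| ≤ ε. If x(·) is a trajectory of ẋ = f(x) with x(t) ∈ X for all t ∈ [0, T] and B(x(0)) ≤ 0, then B(x(t)) ≤ 0 for all t ∈ [0, T]. -/
open RealInnerProductSpace

/-- **Barrier invariance.** If `⟪∇B(x), f(x)⟫ ≤ 0` whenever `x ∈ X` and `|B(x)| ≤ ε`, then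
along any trajectory that stays in `X` on `[0, T]` and starts with `B(x(0)) ≤ 0`, the value
of `B` remains nonpositive on `[0, T]`. -/
theorem barrier_nonpositive_along_trajectory {n : ℕ}
    (X : Set (EuclideanSpace ℝ (Fin n)))
    (f : EuclideanSpace ℝ (Fin n) → EuclideanSpace ℝ (Fin n)) (hf : Continuous f)
    (B : EuclideanSpace ℝ (Fin n) → ℝ) (hB : ContDiff ℝ 1 B)
    (ε : ℝ) (hε : 0 < ε)
    (hBdot : ∀ x ∈ X, |B x| ≤ ε → ⟪gradient B x, f x⟫ ≤ 0)
    (x : ℝ → EuclideanSpace ℝ (Fin n)) (T : ℝ)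
    (hx : ∀ t : ℝ, 0 ≤ t → HasDerivAt x (f (x t)) t)
    (hxX : ∀ t ∈ Set.Icc (0 : ℝ) T, x t ∈ X)
    (hB0 : B (x 0) ≤ 0) :
    ∀ t ∈ Set.Icc (0 : ℝ) T, B (x t) ≤ 0 := by
  have hBdiff : Differentiable ℝ B := hB.differentiable one_ne_zero
  set g : ℝ → ℝ := fun t => B (x t) with hgdef
  have hgderiv : ∀ t : ℝ, 0 ≤ t →
      HasDerivAt g ⟪gradient B (x t), f (x t)⟫ t := by
    intro t ht
    have h1 := (hBdiff (x t)).hasGradientAt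
    have h2 := hx t ht
    have h3 := h1.hasFDerivAt.comp_hasDerivAt t h2
    have h4 : HasDerivAt g _ t := h3
    simpa using h4
  intro t₁ ht₁
  by_contra hcon
  push_neg at hcon
  obtain ⟨ht₁0, ht₁T⟩ := ht₁
  have hgcont : ContinuousOn g (Set.Icc 0 t₁) := fun t ht =>
    ((hBdiff (x t)).continuousAt.comp (hx t ht.1).continuousAt).continuousWithinAt
  -- last zero before t₁
  set S : Set ℝ := Set.Icc 0 t₁ ∩ g ⁻¹' Set.Iic 0 with hSdef
  have hSclosed : IsClosed S := hgcont.preimage_isClosed_of_isClosed isClosed_Icc isClosed_Iic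
  have hSne : S.Nonempty := ⟨0, ⟨le_rfl, ht₁0⟩, hB0⟩
  have hSbdd : BddAbove S := ⟨t₁, fun t ht => ht.1.2⟩
  set s : ℝ := sSup S with hsdef
  have hsS : s ∈ S := hSclosed.csSup_mem hSne hSbdd
  have hs0 : 0 ≤ s := hsS.1.1
  have hst₁ : s ≤ t₁ := hsS.1.2
  have hgs : g s ≤ 0 := hsS.2
  have hpos : ∀ t ∈ Set.Ioc s t₁, 0 < g t := by
    intro t ht
    by_contra h
    push_neg at h
    have : t ∈ S := ⟨⟨hs0.trans ht.1.le, ht.2⟩, h⟩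
    exact absurd (le_csSup hSbdd this) (not_le.2 ht.1)
  -- first time g reaches c after s
  set c : ℝ := min ε (g t₁) with hcdef
  have hc : 0 < c := lt_min hε hcon
  set U : Set ℝ := Set.Icc s t₁ ∩ g ⁻¹' Set.Ici c with hUdef
  have hgcont' : ContinuousOn g (Set.Icc s t₁) :=
    hgcont.mono (Set.Icc_subset_Icc hs0 le_rfl)
  have hUclosed : IsClosed U := hgcont'.preimage_isClosed_of_isClosed isClosed_Icc isClosed_Ici
  have hUne : U.Nonempty := ⟨t₁, ⟨hst₁, le_rfl⟩, show c ≤ g t₁ from min_le_right _ _⟩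
  have hUbdd : BddBelow U := ⟨s, fun t ht => ht.1.1⟩
  set u : ℝ := sInf U with hudef
  have huU : u ∈ U := hUclosed.csInf_mem hUne hUbdd
  have hsu : s ≤ u := huU.1.1
  have hut₁ : u ≤ t₁ := huU.1.2
  have hgu : c ≤ g u := huU.2
  have hlt : ∀ t ∈ Set.Ico s u, g t < c := by
    intro t ht
    by_contra h
    push_neg at h
    have : t ∈ U := ⟨⟨ht.1, ht.2.le.trans hut₁⟩, h⟩
    exact absurd (csInf_le hUbdd this) (not_le.2 ht.2)
  have hanti : AntitoneOn g (Set.Icc s u) := by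
    have hconv : Convex ℝ (Set.Icc s u) := convex_Icc s u
    have hcontsu : ContinuousOn g (Set.Icc s u) :=
      hgcont'.mono (Set.Icc_subset_Icc le_rfl hut₁)
    have hderiv : ∀ t ∈ interior (Set.Icc s u),
        HasDerivAt g ⟪gradient B (x t), f (x t)⟫ t ∧ deriv g t ≤ 0 := by
      intro t ht
      rw [interior_Icc] at ht
      have ht0 : 0 ≤ t := hs0.trans ht.1.le
      have hd := hgderiv t ht0
      refine ⟨hd, ?_⟩
      rw [hd.deriv]
      have htX : x t ∈ X := hxX t ⟨ht0, ht.2.le.trans (hut₁.trans ht₁T)⟩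
      have hgt_pos : 0 < g t := hpos t ⟨ht.1, ht.2.le.trans hut₁⟩
      have hgt_lt : g t < c := hlt t ⟨ht.1.le, ht.2⟩
      exact hBdot (x t) htX (abs_le.2 ⟨by linarith, (hgt_lt.le.trans (min_le_left _ _))⟩)
    exact antitoneOn_of_deriv_nonpos hconv hcontsu
      (fun t ht => ((hderiv t ht).1.differentiableAt).differentiableWithinAt)
      (fun t ht => (hderiv t ht).2)
  have := hanti (Set.left_mem_Icc.2 hsu) (Set.right_mem_Icc.2 hsu) hsu
  linarith
end

section
/- Let X ⊆ ℝⁿ, let X₀ ⊆ X be an initial set and X_u ⊆ X an unsafe set, and let f : ℝⁿ → ℝⁿ be continuous. Suppose B : ℝⁿ → ℝ is continuously differentiable and there exists ε > 0 such that: (i) B(x) ≤ 0 for all x ∈ X₀; (ii) B(x) > 0 for all x ∈ X_u; (iii) ⟨∇B(x), f(x)⟩ ≤ 0 for every x ∈ X with |B(x)| ≤ ε. Then the system is safe: for any T ≥ 0, every trajectory x(·) of ẋ = f(x) with x(0) ∈ X₀ and x(t) ∈ X for all t ∈ [0, T] satisfies x(t) ∉ X_u for all t ∈ [0, T]. -/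
open RealInnerProductSpace

/-- **Safety via barrier functions.** If `B ≤ 0` on the initial set `X₀`, `B > 0` on the
unsafe set `X_u`, and `⟪∇B(x), f(x)⟫ ≤ 0` whenever `x ∈ X` and `|B(x)| ≤ ε`, then every
trajectory starting in `X₀` that remains in `X` on `[0, T]` never enters `X_u` on `[0, T]`. -/
theorem barrier_function_safety {n : ℕ}
    (X X₀ Xu : Set (EuclideanSpace ℝ (Fin n)))
    (hX₀ : X₀ ⊆ X) (hXu : Xu ⊆ X)
    (f : EuclideanSpace ℝ (Fin n) → EuclideanSpace ℝ (Fin n)) (hf : Continuous f)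
    (B : EuclideanSpace ℝ (Fin n) → ℝ) (hB : ContDiff ℝ 1 B)
    (ε : ℝ) (hε : 0 < ε)
    (hB0 : ∀ x ∈ X₀, B x ≤ 0)
    (hBu : ∀ x ∈ Xu, 0 < B x)
    (hBdot : ∀ x ∈ X, |B x| ≤ ε → ⟪gradient B x, f x⟫ ≤ 0) :
    ∀ T : ℝ, 0 ≤ T →
      ∀ x : ℝ → EuclideanSpace ℝ (Fin n),
        (∀ t : ℝ, 0 ≤ t → HasDerivAt x (f (x t)) t) →
        x 0 ∈ X₀ →
        (∀ t ∈ Set.Icc (0 : ℝ) T, x t ∈ X) →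
        ∀ t ∈ Set.Icc (0 : ℝ) T, x t ∉ Xu := by
  intro T hT x hx hx0 hXmem t₁ ht₁ hmem
  set g : ℝ → ℝ := fun s => B (x s) with hgdef
  -- derivative of g
  have hg : ∀ s : ℝ, 0 ≤ s → HasDerivAt g (⟪gradient B (x s), f (x s)⟫) s := by
    intro s hs
    have hd : DifferentiableAt ℝ B (x s) := (hB.differentiable one_ne_zero).differentiableAt
    have hgr := hd.hasGradientAt.hasFDerivAt
    have := hgr.comp_hasDerivAt s (hx s hs)
    simpa [InnerProductSpace.toDual_apply_apply, hgdef, Function.comp_def] using this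
  have gcont : ContinuousOn g (Set.Icc 0 t₁) := fun s hs =>
    ((hg s hs.1).continuousAt).continuousWithinAt
  have hgt₁ : 0 < g t₁ := hBu _ hmem
  have hg0 : g 0 ≤ 0 := hB0 _ hx0
  have ht₁0 : 0 ≤ t₁ := ht₁.1
  -- the value v
  set v : ℝ := min ε (g t₁) with hvdef
  have hv0 : 0 < v := lt_min hε hgt₁
  have hvε : v ≤ ε := min_le_left _ _
  have hvt₁ : v ≤ g t₁ := min_le_right _ _
  -- last time g ≤ 0
  set S : Set ℝ := Set.Icc 0 t₁ ∩ g ⁻¹' Set.Iic 0 with hSdef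
  have hSne : S.Nonempty := ⟨0, ⟨le_rfl, ht₁0⟩, hg0⟩
  have hSbdd : BddAbove S := ⟨t₁, fun s hs => hs.1.2⟩
  have hSclosed : IsClosed S :=
    gcont.preimage_isClosed_of_isClosed isClosed_Icc isClosed_Iic
  set a : ℝ := sSup S with hadef
  have haS : a ∈ S := hSclosed.csSup_mem hSne hSbdd
  have ha0 : 0 ≤ a := haS.1.1
  have hat₁ : a ≤ t₁ := haS.1.2
  have hga : g a ≤ 0 := haS.2
  have hle_a : ∀ s ∈ Set.Icc (0:ℝ) t₁, g s ≤ 0 → s ≤ a := fun s hs hgs =>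
    le_csSup hSbdd ⟨hs, hgs⟩
  have hposafter : ∀ s, a < s → s ≤ t₁ → 0 < g s := by
    intro s has hst
    by_contra h
    exact absurd (hle_a s ⟨le_trans ha0 has.le, hst⟩ (not_lt.1 h)) (not_le.2 has)
  -- first time after a where g ≥ v
  set S2 : Set ℝ := Set.Icc a t₁ ∩ g ⁻¹' Set.Ici v with hS2def
  have hS2ne : S2.Nonempty := ⟨t₁, ⟨hat₁, le_rfl⟩, hvt₁⟩
  have hS2bdd : BddBelow S2 := ⟨a, fun s hs => hs.1.1⟩
  have hIccsub : Set.Icc a t₁ ⊆ Set.Icc 0 t₁ := Set.Icc_subset_Icc ha0 le_rfl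
  have hS2closed : IsClosed S2 :=
    (gcont.mono hIccsub).preimage_isClosed_of_isClosed isClosed_Icc isClosed_Ici
  set b : ℝ := sInf S2 with hbdef
  have hbS2 : b ∈ S2 := hS2closed.csInf_mem hS2ne hS2bdd
  have hab : a ≤ b := hbS2.1.1
  have hbt₁ : b ≤ t₁ := hbS2.1.2
  have hgb : v ≤ g b := hbS2.2
  have haltb : a < b := lt_of_le_of_ne hab (by
    intro h
    rw [← h] at hgb
    exact absurd (lt_of_lt_of_le hv0 hgb) (not_lt.2 hga))
  have hb_le : ∀ s ∈ S2, b ≤ s := fun s hs => csInf_le hS2bdd hs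
  have hltv : ∀ s, a ≤ s → s < b → g s < v := by
    intro s has hsb
    by_contra h
    exact absurd (hb_le s ⟨⟨has, le_trans hsb.le hbt₁⟩, not_lt.1 h⟩) (not_le.2 hsb)
  -- g b = v via IVT
  have hgbv : g b = v := by
    by_contra h
    have hgbv' : v < g b := lt_of_le_of_ne hgb (Ne.symm h)
    have hivt := intermediate_value_Icc hab
      (gcont.mono (Set.Icc_subset_Icc ha0 hbt₁))
    have hvmem : v ∈ Set.Icc (g a) (g b) := ⟨le_trans hga hv0.le, hgb⟩
    obtain ⟨c, hc, hgc⟩ := hivt hvmem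
    have hcb := hb_le c ⟨⟨hc.1, le_trans hc.2 hbt₁⟩, hgc.ge⟩
    have : c = b := le_antisymm hc.2 hcb
    rw [this] at hgc
    exact h hgc
  -- midpoint
  set a' : ℝ := (a + b) / 2 with ha'def
  have haa' : a < a' := by simp [ha'def]; linarith
  have ha'b : a' < b := by simp [ha'def]; linarith
  have ha'0 : 0 < a' := lt_of_le_of_lt ha0 haa'
  -- on [a', b] derivative nonpositive
  have hsub : Set.Icc a' b ⊆ Set.Icc 0 t₁ :=
    Set.Icc_subset_Icc ha'0.le hbt₁
  have hbound : ∀ s ∈ Set.Icc a' b, |g s| ≤ ε := by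
    intro s hs
    have hpos : 0 < g s := hposafter s (lt_of_lt_of_le haa' hs.1) (le_trans hs.2 hbt₁)
    have hub : g s ≤ v := by
      rcases eq_or_lt_of_le hs.2 with h | h
      · rw [h, hgbv]
      · exact (hltv s (le_trans haa'.le hs.1) h).le
    rw [abs_of_pos hpos]
    exact le_trans hub hvε
  have hderiv : ∀ s ∈ Set.Icc a' b, HasDerivAt g (⟪gradient B (x s), f (x s)⟫) s :=
    fun s hs => hg s (le_trans ha'0.le hs.1)
  have hanti : AntitoneOn g (Set.Icc a' b) := by
    apply antitoneOn_of_deriv_nonpos (convex_Icc a' b)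
      (gcont.mono hsub)
    · intro s hs
      rw [interior_Icc] at hs
      exact ((hderiv s (Set.Ioo_subset_Icc_self hs)).differentiableAt).differentiableWithinAt
    · intro s hs
      rw [interior_Icc] at hs
      have hs' := Set.Ioo_subset_Icc_self hs
      rw [(hderiv s hs').deriv]
      refine hBdot _ (hXmem s ?_) (hbound s hs')
      exact ⟨(hsub hs').1, le_trans (hsub hs').2 ht₁.2⟩
  have h1 : g b ≤ g a' := hanti ⟨le_rfl, ha'b.le⟩ ⟨ha'b.le, le_rfl⟩ ha'b.le
  have h2 : g a' < v := hltv a' haa'.le ha'b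
  rw [hgbv] at h1
  exact absurd (lt_of_le_of_lt h1 h2) (lt_irrefl v)
end

section
/- Let X₁, …, X_N, X_{N+1} be i.i.d. real-valued random variables, let α ∈ (0, 1), and set k = ⌈(N + 1)(1 − α)⌉; assume k ≤ N. Then P(X_{N+1} ≤ X_{(k)}) ≥ k / (N + 1) ≥ 1 − α, where X_{(k)} is the k-th order statistic of X₁, …, X_N. -/
open MeasureTheory ProbabilityTheory

/-- The `k`-th order statistic of the values `v 0, …, v (N-1)`: the `k`-th smallest
element (1-indexed) of the multiset of values. -/
noncomputable def orderStat {N : ℕ} (v : Fin N → ℝ) (k : ℕ) : ℝ :=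
  (Multiset.sort (Multiset.map v Finset.univ.val) (· ≤ ·)).getD (k - 1) 0

open scoped ENNReal

lemma L1 {l : List ℝ} (hs : l.Pairwise (· ≤ ·)) (x : ℝ) :
    ∀ {j : ℕ} (hj : j < l.length),
      (x ≤ l.get ⟨j, hj⟩ ↔ l.countP (fun a => decide (a < x)) ≤ j) := by
  induction l with
  | nil => intro j hj; simp at hj
  | cons a t ih =>
    rw [List.pairwise_cons] at hs
    intro j hj
    cases j with
    | zero =>
      simp only [List.get, List.countP_cons]
      constructor
      · intro hxa
        have ht : t.countP (fun a => decide (a < x)) = 0 := by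
          rw [List.countP_eq_zero]
          intro b hb
          simp only [decide_eq_true_eq, not_lt]
          exact hxa.trans (hs.1 b hb)
        rw [ht]
        simp [not_lt.2 hxa]
      · intro h
        by_contra hxa
        push_neg at hxa
        simp [hxa] at h
    | succ j =>
      simp only [List.get, List.countP_cons]
      have hj' : j < t.length := by simpa using hj
      by_cases hax : a < x
      · rw [ih hs.2 hj', if_pos (decide_eq_true hax)]
        omega
      · push_neg at hax
        have hget : x ≤ t.get ⟨j, hj'⟩ := hax.trans (hs.1 _ (t.get_mem _))
        have ht : t.countP (fun a => decide (a < x)) = 0 := by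
          rw [List.countP_eq_zero]
          intro b hb
          simp only [decide_eq_true_eq, not_lt]
          exact hax.trans (hs.1 b hb)
        rw [ht, if_neg (by simp [not_lt.2 hax])]
        simpa using hget

lemma L2 {l : List ℝ} (hs : l.Pairwise (· ≤ ·)) (x : ℝ) :
    ∀ {j : ℕ} (hj : j < l.length),
      l.get ⟨j, hj⟩ ≤ x → j + 1 ≤ l.countP (fun a => decide (a ≤ x)) := by
  induction l with
  | nil => intro j hj; simp at hj
  | cons a t ih =>
    rw [List.pairwise_cons] at hs
    intro j hj
    cases j with
    | zero =>
      intro hax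
      have ha : a ≤ x := hax
      rw [List.countP_cons, if_pos (decide_eq_true ha)]
      omega
    | succ j =>
      intro hgx
      have hj' : j < t.length := by simpa using hj
      have h1 := ih hs.2 hj' hgx
      have hax : a ≤ x := (hs.1 _ (t.get_mem _)).trans hgx
      rw [List.countP_cons, if_pos (decide_eq_true hax)]
      omega

lemma countP_sort_eq {m : ℕ} (v : Fin m → ℝ) (p : ℝ → Prop) [DecidablePred p] :
    (Multiset.sort (Multiset.map v Finset.univ.val) (· ≤ ·)).countP (fun a => decide (p a)) =
      (Finset.univ.filter (fun i => p (v i))).card := by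
  have h1 : (Multiset.sort (Multiset.map v Finset.univ.val) (· ≤ ·)).countP
      (fun a => decide (p a)) = Multiset.countP p (Multiset.map v Finset.univ.val) := by
    rw [← Multiset.coe_countP, Multiset.sort_eq]
  rw [h1, Multiset.countP_map]
  rfl

lemma length_sort_eq {m : ℕ} (v : Fin m → ℝ) :
    (Multiset.sort (Multiset.map v Finset.univ.val) (· ≤ ·)).length = m := by
  rw [Multiset.length_sort, Multiset.card_map]
  simp

lemma le_orderStat_iff {N : ℕ} (v : Fin N → ℝ) {k : ℕ} (hk1 : 1 ≤ k) (hkN : k ≤ N) (x : ℝ) :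
    (x ≤ orderStat v k ↔ (Finset.univ.filter (fun i => v i < x)).card < k) := by
  set l := Multiset.sort (Multiset.map v Finset.univ.val) (· ≤ ·) with hl
  have hlen : l.length = N := length_sort_eq v
  have hj : k - 1 < l.length := by omega
  have hgetD : orderStat v k = l.get ⟨k - 1, hj⟩ := by
    rw [orderStat, ← hl, List.getD_eq_get l 0 ⟨k - 1, hj⟩]
  rw [hgetD, L1 (Multiset.pairwise_sort _ _) x hj, ← countP_sort_eq v (· < x), ← hl]
  omega

lemma count_ranks {n : ℕ} (y : Fin n → ℝ) {k : ℕ} (hk1 : 1 ≤ k) (hkn : k ≤ n) :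
    k ≤ (Finset.univ.filter
      (fun j => (Finset.univ.filter (fun i => y i < y j)).card < k)).card := by
  set l := Multiset.sort (Multiset.map y Finset.univ.val) (· ≤ ·) with hl
  have hlen : l.length = n := length_sort_eq y
  have hsorted : l.Pairwise (· ≤ ·) := Multiset.pairwise_sort _ _
  have hj : k - 1 < l.length := by omega
  set t := l.get ⟨k - 1, hj⟩ with ht
  have hsub : (Finset.univ.filter (fun j => y j ≤ t)) ⊆
      (Finset.univ.filter (fun j => (Finset.univ.filter (fun i => y i < y j)).card < k)) := by
    intro j hjmem
    simp only [Finset.mem_filter, Finset.mem_univ, true_and] at hjmem ⊢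
    have h2 : (Finset.univ.filter (fun i => y i < y j)).card ≤
        (Finset.univ.filter (fun i => y i < t)).card := by
      apply Finset.card_le_card
      intro i hi
      simp only [Finset.mem_filter, Finset.mem_univ, true_and] at hi ⊢
      exact lt_of_lt_of_le hi hjmem
    have h3 : (Finset.univ.filter (fun i => y i < t)).card ≤ k - 1 := by
      rw [← countP_sort_eq y (· < t), ← hl]
      exact (L1 hsorted t hj).1 le_rfl
    omega
  have hcard : k ≤ (Finset.univ.filter (fun j => y j ≤ t)).card := by
    rw [← countP_sort_eq y (· ≤ t), ← hl]
    have := L2 hsorted t hj le_rfl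
    omega
  exact hcard.trans (Finset.card_le_card hsub)

lemma card_castSucc {N : ℕ} (y : Fin (N + 1) → ℝ) :
    (Finset.univ.filter fun i : Fin (N + 1) => y i < y (Fin.last N)).card
      = (Finset.univ.filter fun i : Fin N => y i.castSucc < y (Fin.last N)).card := by
  rw [Finset.card_filter, Finset.card_filter, Fin.sum_univ_castSucc]
  simp

/-- **Marginal coverage guarantee of split conformal prediction.** For i.i.d. real random
variables `X₁, …, X_N, X_{N+1}` and `k = ⌈(N+1)(1-α)⌉ ≤ N`, the probability that
`X_{N+1}` does not exceed the `k`-th order statistic of `X₁, …, X_N` is at least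
`k / (N+1) ≥ 1 - α`. -/
theorem split_conformal_coverage
    {Ω : Type*} [MeasurableSpace Ω] (P : Measure Ω) [IsProbabilityMeasure P]
    (N : ℕ) (X : Fin (N + 1) → Ω → ℝ)
    (hmeas : ∀ i, Measurable (X i))
    (hindep : iIndepFun X P)
    (hident : ∀ i j, IdentDistrib (X i) (X j) P P)
    (α : ℝ) (hα0 : 0 < α) (hα1 : α < 1)
    (k : ℕ) (hk : k = ⌈(N + 1 : ℝ) * (1 - α)⌉₊) (hkN : k ≤ N) :
    (k : ℝ) / (N + 1) ≤
      (P {ω | X (Fin.last N) ω ≤ orderStat (fun i : Fin N => X i.castSucc ω) k}).toReal ∧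
    1 - α ≤ (k : ℝ) / (N + 1) := by
  have hNpos : (0 : ℝ) < N + 1 := by positivity
  have hk1 : 1 ≤ k := by
    rw [hk]
    have hpos : (0 : ℝ) < (N + 1 : ℝ) * (1 - α) := by
      apply mul_pos hNpos
      linarith
    exact Nat.one_le_iff_ne_zero.2 (by
      simp only [ne_eq, Nat.ceil_eq_zero, not_le]
      exact hpos)
  have hceil : (N + 1 : ℝ) * (1 - α) ≤ k := hk ▸ Nat.le_ceil _
  have hsecond : 1 - α ≤ (k : ℝ) / (N + 1) := by
    rw [le_div_iff₀ hNpos]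
    linarith
  refine ⟨?_, hsecond⟩
  -- setup
  set μ : Measure ℝ := P.map (X 0) with hμ
  have hμprob : IsProbabilityMeasure μ := Measure.isProbabilityMeasure_map (hmeas 0).aemeasurable
  set ν : Measure (Fin (N + 1) → ℝ) := Measure.pi (fun _ => μ) with hν
  set Y : Ω → Fin (N + 1) → ℝ := fun ω i => X i ω with hYdef
  have hY : Measurable Y := measurable_pi_lambda _ hmeas
  -- joint law is the product measure
  have hmap : P.map Y = ν := by
    refine (Measure.pi_eq fun s hs => ?_).symm
    rw [Measure.map_apply hY (MeasurableSet.univ_pi hs)]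
    have hpre : Y ⁻¹' Set.pi Set.univ s = ⋂ i ∈ Finset.univ, X i ⁻¹' s i := by
      ext ω; simp [Set.mem_pi, hYdef]
    rw [hpre, hindep.measure_inter_preimage_eq_mul Finset.univ (fun i _ => hs i)]
    refine Finset.prod_congr rfl fun i _ => ?_
    rw [hμ, ← (hident i 0).map_eq, Measure.map_apply (hmeas i) (hs i)]
  -- the rank events
  set S : Fin (N + 1) → Set (Fin (N + 1) → ℝ) :=
    fun j => {y | (Finset.univ.filter fun i => y i < y j).card < k} with hSdef
  have hcardmeas : ∀ j, Measurable
      (fun y : Fin (N + 1) → ℝ => (Finset.univ.filter fun i => y i < y j).card) := by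
    intro j
    simp only [Finset.card_filter]
    refine Finset.measurable_sum _ fun i _ => ?_
    exact Measurable.ite (measurableSet_lt (measurable_pi_apply i) (measurable_pi_apply j))
      measurable_const measurable_const
  have hS : ∀ j, MeasurableSet (S j) := by
    intro j
    have : S j = (fun y : Fin (N + 1) → ℝ =>
        (Finset.univ.filter fun i => y i < y j).card) ⁻¹' {n | n < k} := rfl
    rw [this]
    exact (hcardmeas j) (MeasurableSet.of_discrete)
  -- exchangeability: each S j has the same ν-measure
  have hswap : ∀ j, ν (S j) = ν (S (Fin.last N)) := by
    intro j
    set e : Equiv.Perm (Fin (N + 1)) := Equiv.swap j (Fin.last N) with he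
    have hemeas : Measurable (fun y : Fin (N + 1) → ℝ => y ∘ e) :=
      measurable_pi_lambda _ fun i => measurable_pi_apply (e i)
    have hinv : Measure.map (fun y : Fin (N + 1) → ℝ => y ∘ e) ν = ν := by
      rw [hν]
      refine (Measure.pi_eq fun s hs => ?_).symm
      rw [Measure.map_apply hemeas (MeasurableSet.univ_pi hs)]
      have hpre : (fun y : Fin (N + 1) → ℝ => y ∘ e) ⁻¹' Set.pi Set.univ s
          = Set.pi Set.univ (fun i => s (e.symm i)) := by
        ext y
        simp only [Set.mem_preimage, Set.mem_pi, Set.mem_univ, true_implies, Function.comp]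
        constructor
        · intro h i; simpa using h (e.symm i)
        · intro h i; simpa using h (e i)
      rw [hpre, Measure.pi_pi]
      exact Equiv.prod_comp e.symm (fun i => μ (s i))
    have hpreS : (fun y : Fin (N + 1) → ℝ => y ∘ e) ⁻¹' (S (Fin.last N)) = S j := by
      ext y
      simp only [Set.mem_preimage, hSdef, Set.mem_setOf_eq, Function.comp]
      have hcard : (Finset.univ.filter fun i => y (e i) < y (e (Fin.last N))).card
          = (Finset.univ.filter fun i => y i < y (e (Fin.last N))).card := by
        apply Finset.card_nbij e
        · intro i hi; simp only [Finset.mem_coe, Finset.mem_filter, Finset.mem_univ, true_and] at hi ⊢; exact hi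
        · intro i hi i' hi' hii'; exact e.injective hii'
        · intro i hi
          refine ⟨e.symm i, ?_, by simp⟩
          simp only [Finset.coe_filter, Set.mem_setOf_eq, Finset.mem_univ, true_and] at hi ⊢
          simpa using hi
      rw [hcard]
      have : e (Fin.last N) = j := Equiv.swap_apply_right _ _
      rw [this]
    calc ν (S j) = ν ((fun y : Fin (N + 1) → ℝ => y ∘ e) ⁻¹' (S (Fin.last N))) := by rw [hpreS]
      _ = (Measure.map (fun y : Fin (N + 1) → ℝ => y ∘ e) ν) (S (Fin.last N)) := by
          rw [Measure.map_apply hemeas (hS _)]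
      _ = ν (S (Fin.last N)) := by rw [hinv]
  -- the key counting bound
  have hνprob : IsProbabilityMeasure ν := by rw [hν]; infer_instance
  have hsum : (k : ℝ≥0∞) ≤ ∑ j, ν (S j) := by
    have hpt : ∀ y : Fin (N + 1) → ℝ,
        (k : ℝ≥0∞) ≤ ∑ j, (S j).indicator (fun _ => (1 : ℝ≥0∞)) y := by
      intro y
      have hcount := count_ranks y hk1 (by omega : k ≤ N + 1)
      have heq : ∑ j, (S j).indicator (fun _ => (1 : ℝ≥0∞)) y
          = ((Finset.univ.filter fun j =>
              (Finset.univ.filter fun i => y i < y j).card < k).card : ℝ≥0∞) := by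
        rw [Finset.card_filter, Nat.cast_sum]
        refine Finset.sum_congr rfl fun j _ => ?_
        simp [Set.indicator_apply, hSdef, Set.mem_setOf_eq, apply_ite (Nat.cast : ℕ → ℝ≥0∞)]
      rw [heq]
      exact_mod_cast hcount
    calc (k : ℝ≥0∞) = ∫⁻ _, (k : ℝ≥0∞) ∂ν := by simp
      _ ≤ ∫⁻ y, ∑ j, (S j).indicator (fun _ => (1 : ℝ≥0∞)) y ∂ν := lintegral_mono hpt
      _ = ∑ j, ∫⁻ y, (S j).indicator (fun _ => (1 : ℝ≥0∞)) y ∂ν :=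
          lintegral_finset_sum _ (fun j _ => measurable_const.indicator (hS j))
      _ = ∑ j, ν (S j) := by
          refine Finset.sum_congr rfl fun j _ => ?_
          exact lintegral_indicator_one (hS j)
  have hlast : (k : ℝ≥0∞) ≤ (N + 1 : ℝ≥0∞) * ν (S (Fin.last N)) := by
    calc (k : ℝ≥0∞) ≤ ∑ j, ν (S j) := hsum
      _ = ∑ _j : Fin (N + 1), ν (S (Fin.last N)) := Finset.sum_congr rfl fun j _ => hswap j
      _ = (N + 1 : ℝ≥0∞) * ν (S (Fin.last N)) := by
          rw [Finset.sum_const, Finset.card_univ, Fintype.card_fin, nsmul_eq_mul]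
          push_cast
          ring
  have hdiv : (k : ℝ≥0∞) / (N + 1 : ℝ≥0∞) ≤ ν (S (Fin.last N)) :=
    ENNReal.div_le_of_le_mul' hlast
  -- identify the event
  have hev : {ω | X (Fin.last N) ω ≤ orderStat (fun i : Fin N => X i.castSucc ω) k}
      = Y ⁻¹' (S (Fin.last N)) := by
    ext ω
    simp only [Set.mem_setOf_eq, Set.mem_preimage, hSdef]
    rw [le_orderStat_iff _ hk1 hkN]
    have := card_castSucc (Y ω)
    constructor
    · intro h; rw [this]; exact h
    · intro h; rw [this] at h; exact h
  have hPev : P {ω | X (Fin.last N) ω ≤ orderStat (fun i : Fin N => X i.castSucc ω) k}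
      = ν (S (Fin.last N)) := by
    rw [hev, ← hmap, Measure.map_apply hY (hS _)]
  rw [hPev]
  have htoReal : ((k : ℝ≥0∞) / (N + 1 : ℝ≥0∞)).toReal = (k : ℝ) / (N + 1) := by
    have h1 : ((N : ℝ≥0∞) + 1).toReal = (N : ℝ) + 1 := by
      rw [ENNReal.toReal_add (by simp) (by simp)]
      simp
    simp [ENNReal.toReal_div, h1]
  rw [← htoReal]
  exact ENNReal.toReal_mono (measure_ne_top ν _) hdiv
end

section
/- Let μ be a probability measure on ℝⁿ and s : ℝⁿ → ℝ a measurable score function whose pushforward distribution s_*μ is atomless. Let x₁, …, x_N be drawn i.i.d. from μ, let α, β, ε ∈ (0, 1), set k = ⌈(N + 1)(1 − α)⌉ with k ≤ N and l = N + 1 − k, and let p = s(x)_{(k)} be the k-th order statistic of the calibration scores s(x₁), …, s(x_N). If the regularized incomplete beta function satisfies I_{1−ε}(N − l + 1, l) ≤ β, then with probability at least 1 − β over the draw of the calibration set, μ({x ∈ ℝⁿ : s(x) ≤ p}) ≥ 1 − ε. -/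
open MeasureTheory ProbabilityTheory
open Finset intervalIntegral

/-- The beta function `B(a, b) = ∫₀¹ t^(a-1) (1-t)^(b-1) dt`. -/
noncomputable def betaFun (a b : ℝ) : ℝ :=
  ∫ t in (0 : ℝ)..1, t ^ (a - 1) * (1 - t) ^ (b - 1)

/-- The regularized incomplete beta function
`I_c(a, b) = (∫₀^c t^(a-1) (1-t)^(b-1) dt) / B(a, b)`. -/
noncomputable def regIncBeta (c a b : ℝ) : ℝ :=
  (∫ t in (0 : ℝ)..c, t ^ (a - 1) * (1 - t) ^ (b - 1)) / betaFun a b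

section ConformalAux

/-- key list lemma -/
lemma sorted_getD_lt_iff : ∀ (L : List ℝ), L.Pairwise (· ≤ ·) → ∀ (j : ℕ), j < L.length → ∀ (q : ℝ),
    (L.getD j 0 < q ↔ j + 1 ≤ L.countP (fun a => decide (a < q)))
  | [], _, j, hj, q => by simp at hj
  | a :: L, hL, j, hj, q => by
    rw [List.pairwise_cons] at hL
    obtain ⟨ha, hL'⟩ := hL
    have hcnt : ¬ a < q → L.countP (fun b => decide (b < q)) = 0 := by
      intro h
      rw [List.countP_eq_zero]
      intro b hb
      simp only [decide_eq_true_eq]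
      exact fun hbq => h (lt_of_le_of_lt (ha b hb) hbq)
    cases j with
    | zero =>
      simp only [List.getD_cons_zero, List.countP_cons]
      by_cases hq : a < q
      · simp [hq]
      · simp only [hq, decide_eq_true_eq, if_neg hq, hcnt hq]
        simp [hq]
    | succ i =>
      have hi : i < L.length := by simpa using hj
      have IH := sorted_getD_lt_iff L hL' i hi q
      simp only [List.getD_cons_succ, List.countP_cons]
      by_cases hq : a < q
      · simp only [hq, decide_eq_true_eq, if_pos trivial]
        rw [IH]; omega
      · have h0 := hcnt hq
        have hmem : a ≤ L.getD i 0 := by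
          rw [List.getD_eq_getElem L 0 hi]
          exact ha _ (List.getElem_mem hi)
        constructor
        · intro h; exact absurd (lt_of_le_of_lt hmem h) hq
        · intro h; simp [h0, hq] at h

lemma orderStat_lt_iff {N : ℕ} (v : Fin N → ℝ) {k : ℕ} (hk1 : 1 ≤ k) (hkN : k ≤ N) (q : ℝ) :
    (orderStat v k < q ↔ k ≤ (Finset.univ.filter (fun i => v i < q)).card) := by
  set M := Multiset.map v Finset.univ.val with hM
  set L := Multiset.sort M (· ≤ ·) with hLdef
  have hlen : L.length = N := by
    rw [hLdef, Multiset.length_sort, hM, Multiset.card_map]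
    simp
  have h := sorted_getD_lt_iff L (Multiset.pairwise_sort _ _) (k-1) (by omega) q
  have hk' : k - 1 + 1 = k := by omega
  rw [orderStat, ← hM, ← hLdef, h, hk']
  have hcount : L.countP (fun a => decide (a < q)) = (Finset.univ.filter (fun i => v i < q)).card := by
    have h1 : Multiset.countP (fun a => a < q) M = L.countP (fun a => decide (a < q)) := by
      conv_lhs => rw [← Multiset.sort_eq M (· ≤ ·)]
      rw [Multiset.coe_countP]
    rw [← h1, hM, Multiset.countP_map]
    rw [Finset.card_filter]
    simp [Multiset.countP_eq_card_filter, Finset.card_def]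
  rw [hcount]

/-- telescoping term -/
noncomputable def uFun (N j : ℕ) (c : ℝ) : ℝ :=
  ((N * (N-1).choose (j-1) : ℕ) : ℝ) * c ^ (j-1) * (1-c) ^ (N-j)

lemma term_hasDerivAt {N j : ℕ} (hj1 : 1 ≤ j) (hjN : j ≤ N) (c : ℝ) :
    HasDerivAt (fun x : ℝ => (N.choose j : ℝ) * (x ^ j * (1 - x) ^ (N - j)))
      (uFun N j c - uFun N (j+1) c) c := by
  obtain ⟨m, rfl⟩ : ∃ m, j = m + 1 := ⟨j - 1, by omega⟩
  rcases eq_or_lt_of_le hjN with heq | hlt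
  · -- j = N
    subst heq
    have h : HasDerivAt (fun y : ℝ => ((m+1).choose (m+1) : ℝ) * y ^ (m+1))
        (((m+1).choose (m+1) : ℝ) * (((m+1 : ℕ) : ℝ) * c ^ (m+1-1))) c :=
      (hasDerivAt_pow (m+1) c).const_mul ((m+1).choose (m+1) : ℝ)
    convert h using 1
    · funext x; simp
    · simp only [uFun]
      have h1 : (m+1) - (m+1) = 0 := by omega
      have h2 : (m+1+1) - 1 = m+1 := by omega
      have h3 : (m+1) - (m+1+1) = 0 := by omega
      have h4 : (m+1) - 1 = m := by omega
      rw [h1, h2, h3, h4]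
      simp only [Nat.choose_self, Nat.choose_eq_zero_of_lt (Nat.lt_succ_self m)]
      push_cast
      ring
  · -- j < N
    obtain ⟨r, rfl⟩ : ∃ r, N = (m+1) + (r+1) := ⟨N - m - 2, by omega⟩
    set N := m + 1 + (r + 1) with hN
    have h1 : HasDerivAt (fun x : ℝ => x ^ (m+1)) (((m:ℝ)+1) * c ^ m) c := by
      simpa using hasDerivAt_pow (m+1) c
    have h2 : HasDerivAt (fun x : ℝ => (1 - x) ^ (r+1)) (((r:ℝ)+1) * (1-c) ^ r * (-1)) c := by
      have hin : HasDerivAt (fun x : ℝ => 1 - x) (-1) c := (hasDerivAt_id c).const_sub 1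
      simpa using hin.fun_pow (r+1)
    have h : HasDerivAt (fun y : ℝ => (N.choose (m+1) : ℝ) * (y ^ (m+1) * (1 - y) ^ (r+1))) _ c :=
      (h1.fun_mul h2).const_mul (N.choose (m+1) : ℝ)
    have hNj : N - (m+1) = r+1 := by omega
    rw [hNj]
    convert h using 1
    have e1 : (N : ℕ) * (N-1).choose m = N.choose (m+1) * (m+1) := by
      have := Nat.add_one_mul_choose_eq (N-1) m
      have hN1 : N - 1 + 1 = N := by omega
      rw [hN1] at this
      exact this
    have e2 : (N : ℕ) * (N-1).choose (m+1) = N.choose (m+1) * (r+1) := by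
      have ha := Nat.add_one_mul_choose_eq (N-1) (m+1)
      have hN1 : N - 1 + 1 = N := by omega
      rw [hN1] at ha
      -- ha : N * (N-1).choose (m+1) = N.choose (m+2) * (m+2)
      have hb := Nat.choose_succ_right_eq N (m+1)
      -- hb : N.choose (m+2) * (m+2) = N.choose (m+1) * (N - (m+1))
      rw [ha, hb, hNj]
    have e1' : ((N : ℕ) * (N-1).choose m : ℝ) = (N.choose (m+1) : ℝ) * ((m:ℝ)+1) := by
      exact_mod_cast congrArg (Nat.cast (R := ℝ)) e1
    have e2' : ((N : ℕ) * (N-1).choose (m+1) : ℝ) = (N.choose (m+1) : ℝ) * ((r:ℝ)+1) := by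
      exact_mod_cast congrArg (Nat.cast (R := ℝ)) e2
    simp only [uFun]
    have g1 : m + 1 - 1 = m := by omega
    have g2 : N - (m+1) = r+1 := hNj
    have g3 : m + 1 + 1 - 1 = m + 1 := by omega
    have g4 : N - (m+1+1) = r := by omega
    rw [g1, g2, g3, g4]
    push_cast [e1, e2]
    ring

lemma sum_hasDerivAt {N k : ℕ} (hk1 : 1 ≤ k) (hkN : k ≤ N) (c : ℝ) :
    HasDerivAt (fun x : ℝ => ∑ j ∈ Icc k N, (N.choose j : ℝ) * (x ^ j * (1 - x) ^ (N - j)))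
      (uFun N k c) c := by
  have h : HasDerivAt (fun x : ℝ => ∑ j ∈ Icc k N, (N.choose j : ℝ) * (x ^ j * (1 - x) ^ (N - j)))
      (∑ j ∈ Icc k N, (uFun N j c - uFun N (j+1) c)) c := by
    apply HasDerivAt.fun_sum
    intro j hj
    rw [mem_Icc] at hj
    exact term_hasDerivAt (by omega) hj.2 c
  have htel : ∑ j ∈ Icc k N, (uFun N j c - uFun N (j+1) c) = uFun N k c := by
    rw [← Finset.Ico_add_one_right_eq_Icc, Finset.sum_Ico_eq_sum_range]
    have h2 := Finset.sum_range_sub' (fun i => uFun N (k+i) c) (N+1-k)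
    simp only [Nat.add_zero, show ∀ i, k + (i+1) = k + i + 1 from fun i => by omega,
      show k + (N+1-k) = N+1 by omega] at h2
    rw [show N + 1 - k = N + 1 - k from rfl, h2]
    have hz : uFun N (N+1) c = 0 := by
      simp only [uFun]
      rw [Nat.choose_eq_zero_of_lt (show N-1 < (N+1)-1 by omega)]
      simp
    rw [hz, sub_zero]
  rwa [htel] at h

lemma sum_eq_integral {N k : ℕ} (hk1 : 1 ≤ k) (hkN : k ≤ N) (c : ℝ) :
    ∑ j ∈ Icc k N, (N.choose j : ℝ) * (c ^ j * (1 - c) ^ (N - j))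
      = ∫ t in (0:ℝ)..c, ((N * (N-1).choose (k-1) : ℕ) : ℝ) * (t ^ (k-1) * (1-t) ^ (N-k)) := by
  have heq : ∀ t : ℝ, uFun N k t = ((N * (N-1).choose (k-1) : ℕ) : ℝ) * (t ^ (k-1) * (1-t) ^ (N-k)) := by
    intro t; rw [uFun, mul_assoc]
  have hcont : Continuous (fun t : ℝ => uFun N k t) := by
    simp only [uFun]; continuity
  have h := intervalIntegral.integral_eq_sub_of_hasDerivAt
    (f := fun x : ℝ => ∑ j ∈ Icc k N, (N.choose j : ℝ) * (x ^ j * (1 - x) ^ (N - j)))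
    (f' := fun t => uFun N k t)
    (a := 0) (b := c)
    (fun x _ => sum_hasDerivAt hk1 hkN x)
    (Continuous.intervalIntegrable hcont _ _)
  rw [intervalIntegral.integral_congr (g := fun t => uFun N k t) (fun t _ => (heq t).symm), h]
  have h0 : ∑ j ∈ Icc k N, (N.choose j : ℝ) * ((0:ℝ) ^ j * (1 - 0) ^ (N - j)) = 0 := by
    apply Finset.sum_eq_zero
    intro j hj
    rw [mem_Icc] at hj
    rw [zero_pow (by omega)]
    ring
  rw [h0, sub_zero]


lemma sum_at_one {N k : ℕ} (hk1 : 1 ≤ k) (hkN : k ≤ N) :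
    ∑ j ∈ Icc k N, (N.choose j : ℝ) * ((1:ℝ) ^ j * (1 - 1) ^ (N - j)) = 1 := by
  rw [Finset.sum_eq_single N]
  · simp
  · intro j hj hne
    rw [mem_Icc] at hj
    rw [sub_self, zero_pow (by omega)]
    ring
  · intro h
    exact absurd (mem_Icc.mpr ⟨hkN, le_refl N⟩) h

open scoped Classical in
noncomputable def cubeSet {N : ℕ} (A : Set ℝ) (S : Finset (Fin N)) : Set (Fin N → ℝ) :=
  Set.pi Set.univ fun i => if i ∈ S then A else Aᶜ

open scoped Classical in
lemma mem_cubeSet_iff {N : ℕ} {A : Set ℝ} {S : Finset (Fin N)} {v : Fin N → ℝ} :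
    v ∈ cubeSet A S ↔ Finset.univ.filter (fun i => v i ∈ A) = S := by
  simp only [cubeSet, Set.mem_pi, Set.mem_univ, forall_true_left]
  constructor
  · intro h
    ext i
    simp only [mem_filter, mem_univ, true_and]
    by_cases hi : i ∈ S
    · have := h i; rw [if_pos hi] at this; exact ⟨fun _ => hi, fun _ => this⟩
    · have := h i; rw [if_neg hi] at this
      exact ⟨fun hv => absurd hv this, fun hS => absurd hS hi⟩
  · rintro rfl i
    by_cases hv : v i ∈ A
    · rw [if_pos (by simpa using hv)]; exact hv
    · rw [if_neg (by simpa using hv)]; exact hv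

open scoped Classical in
lemma measurableSet_cubeSet {N : ℕ} {A : Set ℝ} (hA : MeasurableSet A) (S : Finset (Fin N)) :
    MeasurableSet (cubeSet A S) := by
  rw [show cubeSet A S = Set.pi Set.univ (fun i => if i ∈ S then A else Aᶜ) from rfl]
  refine MeasurableSet.univ_pi fun i => ?_
  split_ifs
  · exact hA
  · exact hA.compl

open scoped Classical in
lemma measure_cubeSet {N : ℕ} (ν : Measure ℝ) [IsProbabilityMeasure ν] {A : Set ℝ}
    (hA : MeasurableSet A) (S : Finset (Fin N)) :
    (Measure.pi fun _ : Fin N => ν) (cubeSet A S) = (ν A) ^ S.card * (1 - ν A) ^ (N - S.card) := by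
  rw [cubeSet, Measure.pi_pi]
  have hterm : ∀ i : Fin N, ν (if i ∈ S then A else Aᶜ) = if i ∈ S then ν A else (1 - ν A) := by
    intro i
    split_ifs
    · rfl
    · exact prob_compl_eq_one_sub hA
  rw [Finset.prod_congr rfl (fun i _ => hterm i)]
  rw [Finset.prod_ite, Finset.prod_const, Finset.prod_const]
  have h1 : Finset.filter (fun i : Fin N => i ∈ S) univ = S := by ext i; simp
  have h2 : Finset.filter (fun i : Fin N => i ∉ S) univ = Sᶜ := by ext i; simp
  rw [h1, h2, Finset.card_compl, Fintype.card_fin]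

open scoped Classical in
lemma countSet_eq {N k : ℕ} (A : Set ℝ) :
    {v : Fin N → ℝ | k ≤ (Finset.univ.filter fun i => v i ∈ A).card}
      = ⋃ S ∈ Finset.univ.powerset.filter (fun S : Finset (Fin N) => k ≤ S.card), cubeSet A S := by
  ext v
  simp only [Set.mem_setOf_eq, Set.mem_iUnion, exists_prop, Finset.mem_filter, Finset.mem_powerset]
  constructor
  · intro h
    exact ⟨Finset.univ.filter fun i => v i ∈ A, ⟨Finset.subset_univ _, h⟩, mem_cubeSet_iff.mpr rfl⟩
  · rintro ⟨S, ⟨-, hcard⟩, hv⟩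
    rw [← mem_cubeSet_iff.mp hv] at hcard
    exact hcard

open scoped Classical in
lemma pi_count {N : ℕ} (ν : Measure ℝ) [IsProbabilityMeasure ν] {A : Set ℝ}
    (hA : MeasurableSet A) (k : ℕ) :
    (Measure.pi fun _ : Fin N => ν) {v | k ≤ (Finset.univ.filter fun i => v i ∈ A).card}
      = ∑ j ∈ Finset.Icc k N, (N.choose j : ENNReal) * (ν A) ^ j * (1 - ν A) ^ (N - j) := by
  rw [countSet_eq A]
  rw [measure_biUnion_finset ?hd (fun S _ => measurableSet_cubeSet hA S)]
  case hd =>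
    intro S hS T hT hne
    simp only [Function.onFun]
    rw [Set.disjoint_left]
    intro v hvS hvT
    exact hne (by rw [← mem_cubeSet_iff.mp hvS, ← mem_cubeSet_iff.mp hvT])
  have hre : Finset.univ.powerset.filter (fun S : Finset (Fin N) => k ≤ S.card)
      = (Finset.Icc k N).biUnion (fun j => Finset.powersetCard j Finset.univ) := by
    ext S
    simp only [Finset.mem_filter, Finset.mem_powerset, Finset.mem_biUnion, Finset.mem_Icc,
      Finset.mem_powersetCard]
    constructor
    · rintro ⟨h1, h2⟩
      exact ⟨S.card, ⟨h2, by simpa using Finset.card_le_univ S⟩, Finset.subset_univ _, rfl⟩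
    · rintro ⟨j, ⟨hj1, hj2⟩, -, rfl⟩
      exact ⟨Finset.subset_univ _, hj1⟩
  rw [hre, Finset.sum_biUnion ?hd2]
  case hd2 =>
    intro a ha b hb hab
    simp only [Function.onFun]
    rw [Finset.disjoint_left]
    intro S hSa hSb
    rw [Finset.mem_powersetCard] at hSa hSb
    exact hab (hSa.2 ▸ hSb.2 ▸ rfl)
  refine Finset.sum_congr rfl fun j hj => ?_
  have hconst : ∀ S ∈ Finset.powersetCard j (Finset.univ : Finset (Fin N)),
      (Measure.pi fun _ : Fin N => ν) (cubeSet A S) = (ν A) ^ j * (1 - ν A) ^ (N - j) := by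
    intro S hS
    rw [measure_cubeSet ν hA S, (Finset.mem_powersetCard.mp hS).2]
  rw [Finset.sum_congr rfl hconst, Finset.sum_const, Finset.card_powersetCard, Finset.card_univ,
    Fintype.card_fin, nsmul_eq_mul, mul_assoc]

lemma regIncBeta_eq {N k l : ℕ} (hk1 : 1 ≤ k) (hkN : k ≤ N) (hl : l = N + 1 - k) (c : ℝ) :
    regIncBeta c k l = ∑ j ∈ Icc k N, (N.choose j : ℝ) * (c ^ j * (1 - c) ^ (N - j)) := by
  have hcast : ∀ t : ℝ, t ^ ((k:ℝ) - 1) * (1 - t) ^ ((l:ℝ) - 1)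
      = t ^ (k-1) * (1-t) ^ (N-k) := by
    intro t
    have e1 : (k:ℝ) - 1 = ((k-1 : ℕ) : ℝ) := by rw [Nat.cast_sub hk1]; simp
    have e2 : (l:ℝ) - 1 = ((N-k : ℕ) : ℝ) := by
      subst hl
      rw [Nat.cast_sub (by omega), Nat.cast_sub (by omega)]
      push_cast
      ring
    rw [e1, e2, Real.rpow_natCast, Real.rpow_natCast]
  set M : ℝ := ((N * (N-1).choose (k-1) : ℕ) : ℝ) with hMdef
  have hM : 0 < M := by
    have : 0 < N * (N-1).choose (k-1) := Nat.mul_pos (by omega) (Nat.choose_pos (by omega))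
    rw [hMdef]
    exact_mod_cast this
  have key : ∀ c : ℝ, M * ∫ t in (0:ℝ)..c, t ^ ((k:ℝ)-1) * (1-t) ^ ((l:ℝ)-1)
      = ∑ j ∈ Icc k N, (N.choose j : ℝ) * (c ^ j * (1-c) ^ (N-j)) := by
    intro c
    rw [intervalIntegral.integral_congr (g := fun t : ℝ => t ^ (k-1) * (1-t) ^ (N-k))
      (fun t _ => hcast t)]
    rw [sum_eq_integral hk1 hkN c, intervalIntegral.integral_const_mul]
  have hbeta : betaFun k l = 1 / M := by
    have h1 := key 1
    rw [sum_at_one hk1 hkN] at h1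
    rw [betaFun]
    field_simp
    linarith
  rw [regIncBeta, hbeta, div_div_eq_mul_div, div_one]
  rw [mul_comm]
  exact key c

lemma sum_mono {N k : ℕ} (hk1 : 1 ≤ k) (hkN : k ≤ N) {a b : ℝ} (h0 : 0 ≤ a) (hab : a ≤ b)
    (hb1 : b ≤ 1) :
    (∑ j ∈ Icc k N, (N.choose j : ℝ) * (a ^ j * (1-a) ^ (N-j)))
      ≤ ∑ j ∈ Icc k N, (N.choose j : ℝ) * (b ^ j * (1-b) ^ (N-j)) := by
  rw [sum_eq_integral hk1 hkN a, sum_eq_integral hk1 hkN b]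
  set M : ℝ := ((N * (N-1).choose (k-1) : ℕ) : ℝ) with hMdef
  set f : ℝ → ℝ := fun t => M * (t ^ (k-1) * (1-t) ^ (N-k)) with hfdef
  have hcont : Continuous f := by rw [hfdef]; continuity
  have hint : ∀ u v : ℝ, IntervalIntegrable f MeasureTheory.volume u v :=
    fun u v => hcont.intervalIntegrable u v
  rw [← intervalIntegral.integral_add_adjacent_intervals (hint 0 a) (hint a b)]
  have hnn : 0 ≤ ∫ t in a..b, f t := by
    apply intervalIntegral.integral_nonneg hab
    intro t ht
    have h1 : (0:ℝ) ≤ t := le_trans h0 ht.1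
    have h2 : t ≤ 1 := le_trans ht.2 hb1
    apply mul_nonneg (Nat.cast_nonneg _)
    exact mul_nonneg (pow_nonneg h1 _) (pow_nonneg (by linarith) _)
  linarith


end ConformalAux

-- bridging lemmas
lemma count_lt_set_eq {N k : ℕ} (q : ℝ) :
    {v : Fin N → ℝ | k ≤ (Finset.univ.filter fun i => v i < q).card}
      = ⋃ S ∈ Finset.univ.powerset.filter (fun S : Finset (Fin N) => k ≤ S.card),
          cubeSet (Set.Iio q) S := by
  classical
  rw [← countSet_eq]
  ext v
  have hcard : (Finset.univ.filter fun i => v i < q).card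
      = (Finset.univ.filter fun i => v i ∈ Set.Iio q).card := by
    congr 1
    all_goals exact Finset.filter_congr (fun i _ => Iff.rfl)
  simp only [Set.mem_setOf_eq, hcard]
  convert Iff.rfl

lemma measurable_count_lt {N k : ℕ} (q : ℝ) :
    MeasurableSet {v : Fin N → ℝ | k ≤ (Finset.univ.filter fun i => v i < q).card} := by
  rw [count_lt_set_eq]
  exact MeasurableSet.biUnion (Finset.countable_toSet _)
    (fun S _ => measurableSet_cubeSet measurableSet_Iio S)

lemma pi_count_lt {N : ℕ} (ν : Measure ℝ) [IsProbabilityMeasure ν] (q : ℝ) (k : ℕ) :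
    (Measure.pi fun _ : Fin N => ν) {v | k ≤ (Finset.univ.filter fun i => v i < q).card}
      = ∑ j ∈ Finset.Icc k N,
          (N.choose j : ENNReal) * (ν (Set.Iio q)) ^ j * (1 - ν (Set.Iio q)) ^ (N - j) := by
  classical
  rw [count_lt_set_eq, ← countSet_eq, pi_count ν measurableSet_Iio k]

/-- **PAC guarantee for conformal prediction** (calibration-conditional coverage). With
probability at least `1 - β` over an i.i.d. calibration set `x₁, …, x_N ∼ μ`, the mass of
the prediction region `{x | s(x) ≤ p}` — where `p` is the `k`-th order statistic of the
calibration scores, `k = ⌈(N+1)(1-α)⌉`, `l = N + 1 - k` — is at least `1 - ε`, provided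
`I_{1-ε}(N - l + 1, l) ≤ β`. -/
theorem conformal_pac_guarantee
    {n : ℕ} (μ : Measure (EuclideanSpace ℝ (Fin n))) [IsProbabilityMeasure μ]
    (s : EuclideanSpace ℝ (Fin n) → ℝ) (hs : Measurable s)
    (hatomless : ∀ r : ℝ, μ.map s {r} = 0)
    (N : ℕ) (α β ε : ℝ)
    (hα : α ∈ Set.Ioo (0 : ℝ) 1) (hβ : β ∈ Set.Ioo (0 : ℝ) 1) (hε : ε ∈ Set.Ioo (0 : ℝ) 1)
    (k l : ℕ) (hk : k = ⌈(N + 1 : ℝ) * (1 - α)⌉₊) (hkN : k ≤ N) (hl : l = N + 1 - k)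
    (hbeta : regIncBeta (1 - ε) (N - l + 1) l ≤ β) :
    ENNReal.ofReal (1 - β) ≤
      (Measure.pi fun _ : Fin N => μ)
        {x | 1 - ε ≤
          (μ {y | s y ≤ orderStat (fun i : Fin N => s (x i)) k}).toReal} := by
  have hε0 : 0 < ε := hε.1
  have hε1 : ε < 1 := hε.2
  have h1ε : 0 < 1 - ε := by linarith
  have h1ε1 : 1 - ε < 1 := by linarith
  have hk1 : 1 ≤ k := by
    rw [hk]
    refine Nat.one_le_iff_ne_zero.mpr (Nat.pos_iff_ne_zero.mp (Nat.ceil_pos.mpr ?_))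
    have hα1 : 0 < 1 - α := by linarith [hα.2]
    positivity
  -- rewrite hbeta
  have hcastl : ((N : ℝ) - l + 1) = (k : ℝ) := by
    subst hl
    rw [Nat.cast_sub (by omega : k ≤ N + 1)]
    push_cast
    ring
  rw [hcastl] at hbeta
  set ν : Measure ℝ := μ.map s with hν
  haveI : IsProbabilityMeasure ν := Measure.isProbabilityMeasure_map hs.aemeasurable
  -- quantile
  set S : Set ℝ := {t : ℝ | ENNReal.ofReal (1-ε) ≤ ν (Set.Iic t)} with hSdef
  have hSne : S.Nonempty := by
    have htop := tendsto_measure_Iic_atTop ν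
    rw [measure_univ] at htop
    have hev := htop.eventually_const_lt (ENNReal.ofReal_lt_one.mpr h1ε1)
    obtain ⟨t, ht⟩ := hev.exists
    exact ⟨t, le_of_lt ht⟩
  have hSbdd : BddBelow S := by
    have hanti : Antitone (fun m : ℕ => Set.Iic (-(m:ℝ))) := by
      intro a b hab
      exact Set.Iic_subset_Iic.mpr (by push_cast; linarith [(Nat.cast_le (α := ℝ)).mpr hab])
    have hint : ⋂ m : ℕ, Set.Iic (-(m:ℝ)) = ∅ := by
      ext x
      simp only [Set.mem_iInter, Set.mem_Iic, Set.mem_empty_iff_false, iff_false, not_forall,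
        not_le]
      obtain ⟨m, hm⟩ := exists_nat_gt (-x)
      exact ⟨m, by linarith⟩
    have htend := tendsto_measure_iInter_atTop (μ := ν)
      (fun m => measurableSet_Iic.nullMeasurableSet) hanti ⟨0, measure_ne_top _ _⟩
    rw [hint, measure_empty] at htend
    have hev := htend.eventually_lt_const (ENNReal.ofReal_pos.mpr h1ε)
    obtain ⟨m, hm⟩ := hev.exists
    refine ⟨-(m:ℝ), fun t ht => ?_⟩
    by_contra hcon
    push_neg at hcon
    have : ν (Set.Iic t) ≤ ν (Set.Iic (-(m:ℝ))) :=
      measure_mono (Set.Iic_subset_Iic.mpr hcon.le)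
    exact absurd (le_trans ht this) (not_le.mpr hm)
  set q : ℝ := sInf S with hqdef
  have hq1 : ENNReal.ofReal (1-ε) ≤ ν (Set.Iic q) := by
    have hanti : Antitone (fun m : ℕ => Set.Iic (q + 1/((m:ℝ)+1))) := by
      intro a b hab
      apply Set.Iic_subset_Iic.mpr
      have : 1/((b:ℝ)+1) ≤ 1/((a:ℝ)+1) := by
        apply one_div_le_one_div_of_le (by positivity)
        have := (Nat.cast_le (α := ℝ)).mpr hab
        linarith
      linarith
    have hint : ⋂ m : ℕ, Set.Iic (q + 1/((m:ℝ)+1)) = Set.Iic q := by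
      ext x
      simp only [Set.mem_iInter, Set.mem_Iic]
      constructor
      · intro h
        have hlim : Filter.Tendsto (fun m : ℕ => q + 1/((m:ℝ)+1)) Filter.atTop (nhds q) := by
          have h0 := tendsto_one_div_add_atTop_nhds_zero_nat (𝕜 := ℝ)
          simpa using (tendsto_const_nhds (x := q) (f := Filter.atTop (α := ℕ))).add h0
        exact ge_of_tendsto' hlim h
      · intro h m
        have : (0:ℝ) < 1/((m:ℝ)+1) := by positivity
        linarith
    have htend := tendsto_measure_iInter_atTop (μ := ν)
      (fun m => measurableSet_Iic.nullMeasurableSet) hanti ⟨0, measure_ne_top _ _⟩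
    rw [hint] at htend
    apply ge_of_tendsto' htend
    intro m
    have hlt : q < q + 1/((m:ℝ)+1) := by
      have : (0:ℝ) < 1/((m:ℝ)+1) := by positivity
      linarith
    obtain ⟨t, htS, htlt⟩ := exists_lt_of_csInf_lt hSne hlt
    exact le_trans htS (measure_mono (Set.Iic_subset_Iic.mpr htlt.le))
  have hq2 : ν (Set.Iio q) ≤ ENNReal.ofReal (1-ε) := by
    have hmonoU : Monotone (fun m : ℕ => Set.Iic (q - 1/((m:ℝ)+1))) := by
      intro a b hab
      apply Set.Iic_subset_Iic.mpr
      have : 1/((b:ℝ)+1) ≤ 1/((a:ℝ)+1) := by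
        apply one_div_le_one_div_of_le (by positivity)
        have := (Nat.cast_le (α := ℝ)).mpr hab
        linarith
      linarith
    have hUnion : ⋃ m : ℕ, Set.Iic (q - 1/((m:ℝ)+1)) = Set.Iio q := by
      ext x
      simp only [Set.mem_iUnion, Set.mem_Iic, Set.mem_Iio]
      constructor
      · rintro ⟨m, hm⟩
        have : (0:ℝ) < 1/((m:ℝ)+1) := by positivity
        linarith
      · intro h
        obtain ⟨m, hm⟩ := exists_nat_one_div_lt (show (0:ℝ) < q - x by linarith)
        exact ⟨m, by linarith⟩
    have htend := tendsto_measure_iUnion_atTop (μ := ν) hmonoU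
    rw [hUnion] at htend
    apply le_of_tendsto' htend
    intro m
    rcases le_or_gt (ν (Set.Iic (q - 1/((m:ℝ)+1)))) (ENNReal.ofReal (1-ε)) with h | h
    · exact h
    · exfalso
      have hmem : q - 1/((m:ℝ)+1) ∈ S := le_of_lt h
      have := csInf_le hSbdd hmem
      have hpos : (0:ℝ) < 1/((m:ℝ)+1) := by positivity
      rw [← hqdef] at this
      linarith
  -- the bad event
  have hmp : MeasurePreserving (fun (x : Fin N → EuclideanSpace ℝ (Fin n)) (i : Fin N) => s (x i))
      (Measure.pi fun _ => μ) (Measure.pi fun _ => ν) :=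
    measurePreserving_pi _ _ (fun i => ⟨hs, hν.symm⟩)
  set T : Set (Fin N → ℝ) := {v | k ≤ (Finset.univ.filter fun i => v i < q).card} with hTdef
  have hTmeas : MeasurableSet T := measurable_count_lt q
  have hsub : (fun (x : Fin N → EuclideanSpace ℝ (Fin n)) (i : Fin N) => s (x i)) ⁻¹' Tᶜ ⊆
      {x | 1 - ε ≤ (μ {y | s y ≤ orderStat (fun i : Fin N => s (x i)) k}).toReal} := by
    intro x hx
    simp only [Set.mem_preimage, Set.mem_compl_iff, hTdef, Set.mem_setOf_eq] at hx
    have hq_le : q ≤ orderStat (fun i : Fin N => s (x i)) k := by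
      by_contra hcon
      push_neg at hcon
      exact hx ((orderStat_lt_iff _ hk1 hkN q).mp hcon)
    have hμeq : μ {y | s y ≤ orderStat (fun i : Fin N => s (x i)) k}
        = ν (Set.Iic (orderStat (fun i : Fin N => s (x i)) k)) := by
      rw [hν, Measure.map_apply hs measurableSet_Iic]
      rfl
    rw [Set.mem_setOf_eq, hμeq]
    have h1 : ENNReal.ofReal (1-ε) ≤ ν (Set.Iic (orderStat (fun i : Fin N => s (x i)) k)) :=
      le_trans hq1 (measure_mono (Set.Iic_subset_Iic.mpr hq_le))
    calc 1 - ε = (ENNReal.ofReal (1-ε)).toReal := (ENNReal.toReal_ofReal h1ε.le).symm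
      _ ≤ _ := ENNReal.toReal_mono (measure_ne_top _ _) h1
  -- compute measure of T
  set P : ENNReal := ν (Set.Iio q) with hPdef
  set c₀ : ℝ := P.toReal with hc₀def
  have hPfin : P ≠ ⊤ := measure_ne_top _ _
  have hP : P = ENNReal.ofReal c₀ := (ENNReal.ofReal_toReal hPfin).symm
  have hc₀0 : 0 ≤ c₀ := ENNReal.toReal_nonneg
  have hc₀ : c₀ ≤ 1 - ε := by
    have := ENNReal.toReal_mono ENNReal.ofReal_ne_top hq2
    rwa [ENNReal.toReal_ofReal h1ε.le] at this
  have hc₀1 : c₀ ≤ 1 := by linarith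
  have h1P : 1 - ENNReal.ofReal c₀ = ENNReal.ofReal (1 - c₀) := by
    rw [ENNReal.ofReal_sub 1 hc₀0, ENNReal.ofReal_one]
  have hνT : (Measure.pi fun _ : Fin N => ν) T
      = ENNReal.ofReal (∑ j ∈ Icc k N, (N.choose j : ℝ) * (c₀ ^ j * (1-c₀) ^ (N-j))) := by
    rw [hTdef, pi_count_lt ν q k, ← hPdef]
    rw [ENNReal.ofReal_sum_of_nonneg (fun j hj => mul_nonneg (Nat.cast_nonneg _)
      (mul_nonneg (pow_nonneg hc₀0 _) (pow_nonneg (by linarith) _)))]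
    refine Finset.sum_congr rfl fun j hj => ?_
    rw [hP, h1P, ← ENNReal.ofReal_pow hc₀0, ← ENNReal.ofReal_pow (by linarith : (0:ℝ) ≤ 1 - c₀),
      ← ENNReal.ofReal_natCast (N.choose j), ← ENNReal.ofReal_mul (Nat.cast_nonneg _),
      ← ENNReal.ofReal_mul (by positivity)]
    exact congrArg _ (by ring)
  have hTle : (Measure.pi fun _ : Fin N => ν) T ≤ ENNReal.ofReal β := by
    rw [hνT]
    apply ENNReal.ofReal_le_ofReal
    calc ∑ j ∈ Icc k N, (N.choose j : ℝ) * (c₀ ^ j * (1-c₀) ^ (N-j))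
        ≤ ∑ j ∈ Icc k N, (N.choose j : ℝ) * ((1-ε) ^ j * (1-(1-ε)) ^ (N-j)) :=
          sum_mono hk1 hkN hc₀0 hc₀ (by linarith)
      _ = regIncBeta (1-ε) k l := (regIncBeta_eq hk1 hkN hl (1-ε)).symm
      _ ≤ β := hbeta
  -- final chain
  calc ENNReal.ofReal (1 - β)
      = 1 - ENNReal.ofReal β := by rw [ENNReal.ofReal_sub 1 hβ.1.le, ENNReal.ofReal_one]
    _ ≤ 1 - (Measure.pi fun _ : Fin N => ν) T := tsub_le_tsub_left hTle 1
    _ = (Measure.pi fun _ : Fin N => ν) Tᶜ := (prob_compl_eq_one_sub hTmeas).symm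
    _ = (Measure.pi fun _ : Fin N => μ)
          ((fun (x : Fin N → EuclideanSpace ℝ (Fin n)) (i : Fin N) => s (x i)) ⁻¹' Tᶜ) :=
        (hmp.measure_preimage hTmeas.compl.nullMeasurableSet).symm
    _ ≤ _ := measure_mono hsub
end

section
/- Let μ be a probability measure on ℝⁿ and s : ℝⁿ → ℝ a measurable score function whose pushforward distribution s_*μ is atomless. Let x₁, …, x_N be drawn i.i.d. from μ, let α, β, ε ∈ (0, 1), set k = ⌈(N + 1)(1 − α)⌉ with k ≤ N and l = N + 1 − k, let p = s(x)_{(k)} be the k-th order statistic of the calibration scores s(x₁), …, s(x_N), and assume the regularized incomplete beta function satisfies I_{1−ε}(N − l + 1, l) ≤ β. Then with probability at least 1 − β over the draw of the calibration set, either p > 0 or μ({x ∈ ℝⁿ : s(x) ≤ 0}) ≥ 1 − ε. In particular, if the verification procedure returns p ≤ 0, then with confidence at least 1 − β a randomly drawn test point x ∼ μ satisfies s(x) ≤ 0 with probability at least 1 − ε. -/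
open MeasureTheory ProbabilityTheory

open intervalIntegral in
private lemma binom_tail_eq (N : ℕ) : ∀ d k : ℕ, k + d = N → 1 ≤ k →
    ∀ c : ℝ, ∑ j ∈ Finset.Icc k N, (N.choose j : ℝ) * c ^ j * (1 - c) ^ (N - j)
      = (k * N.choose k : ℝ) * ∫ t in (0:ℝ)..c, t ^ (k - 1) * (1 - t) ^ (N - k) := by
  intro d
  induction d with
  | zero =>
    intro k hkd hk1 c
    have hkN : k = N := by omega
    subst hkN
    simp only [Finset.Icc_self, Finset.sum_singleton, Nat.choose_self, Nat.sub_self, pow_zero,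
      Nat.cast_one, mul_one, one_mul]
    rw [integral_pow]
    have hkk : k - 1 + 1 = k := by omega
    rw [hkk]
    have : (k:ℝ) ≠ 0 := by positivity
    field_simp
    rw [Nat.cast_sub hk1, zero_pow (by omega)]
    push_cast
    ring
  | succ d ih =>
    intro k hkd hk1 c
    have hkN : k + 1 ≤ N := by omega
    have ih' := ih (k + 1) (by omega) (by omega) c
    -- split sum
    have hsplit : Finset.Icc k N = insert k (Finset.Icc (k + 1) N) := by
      ext x; simp only [Finset.mem_Icc, Finset.mem_insert]; omega
    rw [hsplit, Finset.sum_insert (by simp), ih']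
    -- FTC step
    set f : ℝ → ℝ := fun t => t ^ k * (1 - t) ^ (N - k) with hf
    set f' : ℝ → ℝ := fun t => (k : ℝ) * t ^ (k - 1) * (1 - t) ^ (N - k)
      - (N - k : ℕ) * (t ^ k * (1 - t) ^ (N - k - 1)) with hf'
    have hder : ∀ t : ℝ, HasDerivAt f (f' t) t := by
      intro t
      have h1 : HasDerivAt (fun t : ℝ => t ^ k) ((k : ℝ) * t ^ (k - 1)) t := hasDerivAt_pow k t
      have h2 : HasDerivAt (fun t : ℝ => (1 - t) ^ (N - k))
          (((N - k : ℕ) : ℝ) * (1 - t) ^ (N - k - 1) * (-1)) t := by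
        exact (hasDerivAt_pow (N - k) (1 - t)).comp t ((hasDerivAt_id t).const_sub 1)
      have := h1.mul h2
      refine HasDerivAt.congr_deriv (f := f) this ?_
      simp only [hf']
      ring
    have hcont : Continuous f' := by fun_prop
    have hint : ∫ t in (0:ℝ)..c, f' t = f c - f 0 := by
      exact integral_eq_sub_of_hasDerivAt (fun t _ => hder t) (hcont.intervalIntegrable _ _)
    have hf0 : f 0 = 0 := by
      simp only [hf]
      rw [zero_pow (by omega), zero_mul]
    have hi1 : IntervalIntegrable (fun t : ℝ => t ^ (k-1) * (1 - t) ^ (N - k)) MeasureTheory.volume 0 c := by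
      apply Continuous.intervalIntegrable; fun_prop
    have hi2 : IntervalIntegrable (fun t : ℝ => t ^ k * (1 - t) ^ (N - k - 1)) MeasureTheory.volume 0 c := by
      apply Continuous.intervalIntegrable; fun_prop
    have hsub : ∫ t in (0:ℝ)..c, f' t
        = (k:ℝ) * (∫ t in (0:ℝ)..c, t ^ (k-1) * (1 - t) ^ (N - k))
          - ((N - k : ℕ) : ℝ) * ∫ t in (0:ℝ)..c, t ^ k * (1 - t) ^ (N - k - 1) := by
      simp only [hf']
      have e1 : (fun t : ℝ => (k : ℝ) * t ^ (k - 1) * (1 - t) ^ (N - k))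
          = fun t : ℝ => (k : ℝ) * (t ^ (k - 1) * (1 - t) ^ (N - k)) := by
        funext t; ring
      have e2 : (fun t : ℝ => ((N - k : ℕ) : ℝ) * (t ^ k * (1 - t) ^ (N - k - 1)))
          = fun t : ℝ => ((N - k : ℕ) : ℝ) * (t ^ k * (1 - t) ^ (N - k - 1)) := rfl
      rw [show (fun t : ℝ => (k : ℝ) * t ^ (k - 1) * (1 - t) ^ (N - k)
          - ((N - k : ℕ) : ℝ) * (t ^ k * (1 - t) ^ (N - k - 1)))
          = fun t : ℝ => (k : ℝ) * (t ^ (k - 1) * (1 - t) ^ (N - k))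
          - ((N - k : ℕ) : ℝ) * (t ^ k * (1 - t) ^ (N - k - 1)) from by funext t; ring]
      rw [integral_sub (hi1.const_mul _) (hi2.const_mul _), intervalIntegral.integral_const_mul,
        intervalIntegral.integral_const_mul]
    -- combine
    have key : (k:ℝ) * (∫ t in (0:ℝ)..c, t ^ (k-1) * (1 - t) ^ (N - k))
        - ((N - k : ℕ) : ℝ) * (∫ t in (0:ℝ)..c, t ^ k * (1 - t) ^ (N - k - 1))
        = c ^ k * (1 - c) ^ (N - k) := by
      rw [← hsub, hint, hf0, sub_zero]
    have hcn : (k+1) * N.choose (k+1) = (N - k) * N.choose k := by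
      rw [mul_comm, Nat.choose_succ_right_eq, mul_comm]
    have hchoose : ((k+1 : ℕ) : ℝ) * (N.choose (k+1) : ℝ)
        = ((N - k : ℕ) : ℝ) * (N.choose k : ℝ) := by
      exact_mod_cast congrArg (Nat.cast : ℕ → ℝ) hcn
    have hNk1 : N - (k+1) = N - k - 1 := by omega
    rw [hNk1]
    have hk1' : k + 1 - 1 = k := by omega
    rw [hk1']
    push_cast at hchoose ⊢
    linear_combination (-(N.choose k : ℝ)) * key
      + (∫ t in (0:ℝ)..c, t ^ k * (1 - t) ^ (N - k - 1)) * hchoose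

private lemma count_ge_of_orderStat_le {N : ℕ} (v : Fin N → ℝ) (k : ℕ) (hk1 : 1 ≤ k) (hkN : k ≤ N)
    (h : orderStat v k ≤ 0) : k ≤ (Finset.univ.filter fun i => v i ≤ 0).card := by
  classical
  set M : Multiset ℝ := Multiset.map v Finset.univ.val with hM
  set L : List ℝ := Multiset.sort M (· ≤ ·) with hL
  have hlen : L.length = N := by
    rw [hL, Multiset.length_sort, hM, Multiset.card_map]
    simp
  have hsorted : L.Pairwise (· ≤ ·) := Multiset.pairwise_sort _ _
  have hkl : k - 1 < L.length := by omega
  have hget : L[k - 1] ≤ 0 := by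
    have h' := h
    unfold orderStat at h'
    rwa [List.getD_eq_getElem _ _ hkl] at h'
  -- every element of take k L is ≤ 0
  have htake : ∀ a ∈ L.take k, a ≤ 0 := by
    intro a ha
    obtain ⟨i, hi, rfl⟩ := List.mem_iff_getElem.mp ha
    rw [List.getElem_take]
    have hik : i ≤ k - 1 := by
      have := hi
      simp only [List.length_take] at this
      omega
    have hle : L.get ⟨i, by omega⟩ ≤ L.get ⟨k - 1, hkl⟩ :=
      hsorted.rel_get_of_le (by simpa using hik)
    simpa using hle.trans hget
  have hcountL : k ≤ L.countP (fun a => decide (a ≤ 0)) := by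
    calc k = (L.take k).length := by rw [List.length_take]; omega
    _ = (L.take k).countP (fun a => decide (a ≤ 0)) := by
        rw [List.countP_eq_length.mpr]
        intro a ha
        simpa using htake a ha
    _ ≤ L.countP (fun a => decide (a ≤ 0)) := by
        conv_rhs => rw [← List.take_append_drop k L]
        rw [List.countP_append]
        omega
  -- transfer to the filter card
  have h1 : (Finset.univ.filter fun i => v i ≤ 0).card = Multiset.countP (fun a => a ≤ 0) M := by
    rw [hM, Multiset.countP_map]
    rfl
  have h2 : Multiset.countP (fun a => a ≤ 0) M = L.countP (fun a => decide (a ≤ 0)) := by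
    rw [← Multiset.coe_countP]
    congr 1
    rw [hL, Multiset.sort_eq]
  omega

/-- **Verification via conformal prediction.** With probability at least `1 - β` over the
i.i.d. draw of the calibration set, either the conformal quantile `p` (the `k`-th order
statistic of the calibration scores) is positive, or a randomly drawn test point `x ∼ μ`
satisfies `s(x) ≤ 0` with probability at least `1 - ε`. -/
theorem conformal_verification
    {n : ℕ} (μ : Measure (EuclideanSpace ℝ (Fin n))) [IsProbabilityMeasure μ]
    (s : EuclideanSpace ℝ (Fin n) → ℝ) (hs : Measurable s)
    (hatomless : ∀ r : ℝ, μ.map s {r} = 0)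
    (N : ℕ) (α β ε : ℝ)
    (hα : α ∈ Set.Ioo (0 : ℝ) 1) (hβ : β ∈ Set.Ioo (0 : ℝ) 1) (hε : ε ∈ Set.Ioo (0 : ℝ) 1)
    (k l : ℕ) (hk : k = ⌈(N + 1 : ℝ) * (1 - α)⌉₊) (hkN : k ≤ N) (hl : l = N + 1 - k)
    (hbeta : regIncBeta (1 - ε) (N - l + 1) l ≤ β) :
    ENNReal.ofReal (1 - β) ≤
      (Measure.pi fun _ : Fin N => μ)
        {x | 0 < orderStat (fun i : Fin N => s (x i)) k ∨
          1 - ε ≤ (μ {y | s y ≤ 0}).toReal} := by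
  classical
  by_cases hq : 1 - ε ≤ (μ {y | s y ≤ 0}).toReal
  · have huniv : {x : Fin N → EuclideanSpace ℝ (Fin n) |
        0 < orderStat (fun i : Fin N => s (x i)) k ∨ 1 - ε ≤ (μ {y | s y ≤ 0}).toReal}
        = Set.univ := Set.eq_univ_of_forall fun x => Or.inr hq
    rw [huniv, measure_univ]
    exact ENNReal.ofReal_le_one.mpr (by linarith [hβ.1])
  push_neg at hq
  set P : Measure (Fin N → EuclideanSpace ℝ (Fin n)) := Measure.pi fun _ : Fin N => μ with hP
  set S : Set (EuclideanSpace ℝ (Fin n)) := {y | s y ≤ 0} with hSdef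
  have hS : MeasurableSet S := measurableSet_le hs measurable_const
  set q : ℝ := (μ S).toReal with hqdef
  have hq0 : 0 ≤ q := ENNReal.toReal_nonneg
  have hq1 : q ≤ 1 := by
    have h := prob_le_one (μ := μ) (s := S)
    simpa [hqdef] using ENNReal.toReal_mono (by simp) h
  have hμS : μ S = ENNReal.ofReal q := (ENNReal.ofReal_toReal (measure_ne_top μ S)).symm
  have hμSc : μ Sᶜ = ENNReal.ofReal (1 - q) := by
    rw [prob_compl_eq_one_sub hS, ENNReal.ofReal_sub 1 hq0, ENNReal.ofReal_one, hμS]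
  have hk1 : 1 ≤ k := by
    rw [hk]
    have : (0:ℝ) < (N + 1 : ℝ) * (1 - α) :=
      mul_pos (by positivity) (by linarith [hα.2])
    exact Nat.ceil_pos.mpr this
  set D : (Fin N → EuclideanSpace ℝ (Fin n)) → Finset (Fin N) := fun x => Finset.univ.filter fun i => s (x i) ≤ 0
    with hD
  set E : Set (Fin N → EuclideanSpace ℝ (Fin n)) := {x | k ≤ (D x).card} with hE
  set 𝒜 : Finset (Finset (Fin N)) := Finset.univ.filter fun A : Finset (Fin N) => k ≤ A.card
    with h𝒜
  have hEA : ∀ A : Finset (Fin N),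
      D ⁻¹' {A} = Set.univ.pi (fun i => if i ∈ A then S else Sᶜ) := by
    intro A
    ext x
    simp only [Set.mem_preimage, Set.mem_singleton_iff, Set.mem_pi, Set.mem_univ, true_implies,
      hD, Finset.ext_iff, Finset.mem_filter, Finset.mem_univ, true_and]
    constructor
    · intro hx i
      by_cases hiA : i ∈ A
      · simp only [hiA, if_true]
        exact (hx i).mpr hiA
      · simp only [hiA, if_false]
        exact fun h => hiA ((hx i).mp h)
    · intro hx i
      constructor
      · intro hsi
        by_contra hiA
        have := hx i
        simp only [hiA, if_false] at this
        exact this hsi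
      · intro hiA
        have := hx i
        simp only [hiA, if_true] at this
        exact this
  have hmeasA : ∀ A : Finset (Fin N), MeasurableSet (D ⁻¹' {A}) := by
    intro A
    rw [hEA]
    exact MeasurableSet.univ_pi fun i => by split <;> [exact hS; exact hS.compl]
  have hPA : ∀ A : Finset (Fin N),
      P (D ⁻¹' {A}) = ENNReal.ofReal (q ^ A.card * (1 - q) ^ (N - A.card)) := by
    intro A
    rw [hEA, hP, Measure.pi_pi]
    have : ∀ i : Fin N, μ (if i ∈ A then S else Sᶜ)
        = if i ∈ A then ENNReal.ofReal q else ENNReal.ofReal (1 - q) := by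
      intro i; split <;> [exact hμS; exact hμSc]
    rw [Finset.prod_congr rfl fun i _ => this i, Finset.prod_ite, Finset.prod_const,
      Finset.prod_const]
    have e1 : Finset.univ.filter (fun i => i ∈ A) = A := by
      ext i; simp
    have e2 : Finset.univ.filter (fun i => i ∉ A) = Aᶜ := by
      ext i; simp
    rw [e1, e2, Finset.card_compl, ENNReal.ofReal_mul (by positivity),
      ENNReal.ofReal_pow hq0, ENNReal.ofReal_pow (by linarith)]
    simp
  have hEunion : E = ⋃ A ∈ 𝒜, D ⁻¹' {A} := by
    ext x
    simp only [hE, Set.mem_setOf_eq, Set.mem_iUnion, Set.mem_preimage, Set.mem_singleton_iff,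
      h𝒜, Finset.mem_filter, Finset.mem_univ, true_and]
    exact ⟨fun hx => ⟨D x, hx, rfl⟩, fun ⟨A, hA, hDx⟩ => hDx ▸ hA⟩
  have hEmeas : MeasurableSet E := by
    rw [hEunion]
    exact Finset.measurableSet_biUnion 𝒜 fun A _ => hmeasA A
  have hPE : P E = ∑ A ∈ 𝒜, P (D ⁻¹' {A}) := by
    rw [hEunion]
    refine measure_biUnion_finset ?_ fun A _ => hmeasA A
    intro A _ B _ hAB
    refine Set.disjoint_left.mpr fun x hxA hxB => hAB ?_
    simp only [Set.mem_preimage, Set.mem_singleton_iff] at hxA hxB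
    rw [← hxA, ← hxB]
  -- real-valued bound
  have hsum_eq : ∑ A ∈ 𝒜, q ^ A.card * (1 - q) ^ (N - A.card)
      = ∑ j ∈ Finset.Icc k N, (N.choose j : ℝ) * q ^ j * (1 - q) ^ (N - j) := by
    rw [← Finset.sum_fiberwise_of_maps_to (g := Finset.card) (t := Finset.Icc k N)
      (fun A hA => by
        simp only [h𝒜, Finset.mem_filter, Finset.mem_univ, true_and] at hA
        exact Finset.mem_Icc.mpr ⟨hA, by simpa using Finset.card_le_univ A⟩)
      (fun A => q ^ A.card * (1 - q) ^ (N - A.card))]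
    refine Finset.sum_congr rfl fun j hj => ?_
    have hfil : (𝒜.filter fun A => A.card = j) = Finset.powersetCard j Finset.univ := by
      ext A
      simp only [Finset.mem_filter, h𝒜, Finset.mem_univ, true_and,
        Finset.mem_powersetCard_univ]
      have hjk := (Finset.mem_Icc.mp hj).1
      constructor
      · rintro ⟨-, h⟩; exact h
      · rintro h; exact ⟨by omega, h⟩
    rw [hfil]
    rw [Finset.sum_eq_card_nsmul (b := q ^ j * (1 - q) ^ (N - j)) (fun A hA => by
      rw [Finset.mem_powersetCard_univ] at hA
      rw [hA])]
    rw [Finset.card_powersetCard, nsmul_eq_mul]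
    simp only [Finset.card_univ, Fintype.card_fin]
    ring
  have key := binom_tail_eq N (N - k) k (by omega) hk1
  -- beta function value
  have hchoose_pos : (0:ℝ) < (k : ℝ) * (N.choose k : ℝ) := by
    have := Nat.choose_pos hkN
    positivity
  have hintegrand : (fun t : ℝ => t ^ ((k:ℝ) - 1) * (1 - t) ^ ((l:ℝ) - 1))
      = fun t : ℝ => t ^ (k - 1) * (1 - t) ^ (N - k) := by
    funext t
    have e1 : (k:ℝ) - 1 = ((k - 1 : ℕ) : ℝ) := by
      rw [Nat.cast_sub hk1]; simp
    have e2 : (l:ℝ) - 1 = ((N - k : ℕ) : ℝ) := by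
      have : l - 1 = N - k := by omega
      rw [← this, Nat.cast_sub (by omega)]
      simp
    rw [e1, e2, Real.rpow_natCast, Real.rpow_natCast]
  have hbetaval : betaFun k l = 1 / ((k : ℝ) * (N.choose k : ℝ)) := by
    unfold betaFun
    rw [hintegrand]
    have h1 := key 1
    have hsum1 : ∑ j ∈ Finset.Icc k N, (N.choose j : ℝ) * 1 ^ j * (1 - 1) ^ (N - j) = 1 := by
      rw [Finset.sum_eq_single N]
      · simp
      · intro j hj hjN
        have : 0 < N - j := by
          have := Finset.mem_Icc.mp hj; omega
        simp [zero_pow (by omega : N - j ≠ 0)]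
      · intro hN; exact absurd (Finset.mem_Icc.mpr ⟨hkN, le_refl N⟩) hN
    rw [hsum1] at h1
    rw [eq_div_iff hchoose_pos.ne']
    linear_combination (-1 : ℝ) * h1
  have harg : ((N:ℝ) - (l:ℝ) + 1) = (k:ℝ) := by
    have : (l:ℝ) = (N:ℝ) + 1 - (k:ℝ) := by
      have hlk : l + k = N + 1 := by omega
      have := congrArg (Nat.cast : ℕ → ℝ) hlk
      push_cast at this
      linarith
    rw [this]; ring
  have hreg : regIncBeta (1 - ε) ((N:ℝ) - (l:ℝ) + 1) (l:ℝ)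
      = ((k : ℝ) * (N.choose k : ℝ)) * ∫ t in (0:ℝ)..(1 - ε), t ^ (k - 1) * (1 - t) ^ (N - k) := by
    rw [harg]
    unfold regIncBeta
    rw [hintegrand, hbetaval]
    rw [div_div_eq_mul_div, div_one]
    ring
  -- integral monotonicity
  have hmono : (∫ t in (0:ℝ)..q, t ^ (k - 1) * (1 - t) ^ (N - k))
      ≤ ∫ t in (0:ℝ)..(1 - ε), t ^ (k - 1) * (1 - t) ^ (N - k) := by
    have hq' : q ≤ 1 - ε := le_of_lt hq
    refine intervalIntegral.integral_mono_interval le_rfl hq0 hq' ?_ ?_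
    · refine ae_restrict_of_forall_mem measurableSet_Ioc fun t ht => ?_
      have h1 : (0:ℝ) ≤ t := ht.1.le
      have h2 : (0:ℝ) ≤ 1 - t := by
        have := ht.2
        have := hε.2
        nlinarith [hε.1]
      positivity
    · exact (by fun_prop : Continuous fun t : ℝ => t ^ (k-1) * (1-t) ^ (N-k)).intervalIntegrable _ _
  have hrealbound : ∑ A ∈ 𝒜, q ^ A.card * (1 - q) ^ (N - A.card) ≤ β := by
    rw [hsum_eq, key q]
    calc ((k : ℝ) * (N.choose k : ℝ)) * ∫ t in (0:ℝ)..q, t ^ (k - 1) * (1 - t) ^ (N - k)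
        ≤ ((k : ℝ) * (N.choose k : ℝ)) * ∫ t in (0:ℝ)..(1-ε), t ^ (k - 1) * (1 - t) ^ (N - k) := by
          exact mul_le_mul_of_nonneg_left hmono hchoose_pos.le
      _ = regIncBeta (1 - ε) ((N:ℝ) - (l:ℝ) + 1) (l:ℝ) := hreg.symm
      _ ≤ β := hbeta
  have hPEle : P E ≤ ENNReal.ofReal β := by
    rw [hPE, Finset.sum_congr rfl fun A _ => hPA A,
      ← ENNReal.ofReal_sum_of_nonneg fun A _ =>
        mul_nonneg (pow_nonneg hq0 _) (pow_nonneg (by linarith) _)]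
    exact ENNReal.ofReal_le_ofReal hrealbound
  have hsubset : Eᶜ ⊆ {x : Fin N → EuclideanSpace ℝ (Fin n) | 0 < orderStat (fun i : Fin N => s (x i)) k ∨
      1 - ε ≤ (μ {y | s y ≤ 0}).toReal} := by
    intro x hx
    left
    by_contra h'
    push_neg at h'
    exact hx (count_ge_of_orderStat_le (fun i => s (x i)) k hk1 hkN h')
  calc ENNReal.ofReal (1 - β) = 1 - ENNReal.ofReal β := by
        rw [ENNReal.ofReal_sub 1 hβ.1.le, ENNReal.ofReal_one]
    _ ≤ 1 - P E := tsub_le_tsub_left hPEle 1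
    _ = P Eᶜ := (prob_compl_eq_one_sub hEmeas).symm
    _ ≤ _ := measure_mono hsubset
end
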